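/- arXiv:1404.1234 — 3 statements merged into one kernel-verified Lean document; each statement's English description precedes it below -/
import Mathlib

section
/- For holomorphic F, G : 𝔻 → ℂ, at every point z where (F(z), G(z)) ≠ (0,0), the expression (|F'|²+|G'|²)(|F|²+|G|²) − |F'·conj(F) + G'·conj(G)|² is nonnegative (Cauchy–Schwarz), and hence the Laplacian of log(|F|²+|G|²)/2, which equals 2 times this expression divided by (|F|²+|G|²)², is nonnegative. -/
open MeasureTheory Metric Filter Set
open scoped Topology ComplexConjugate

noncomputable section

/-- The Laplacian `∂²u/∂x² + ∂²u/∂y²` of a function `u : ℂ → ℝ` at a point. -/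
def laplacian (u : ℂ → ℝ) (z : ℂ) : ℝ :=
  fderiv ℝ (fun w => fderiv ℝ u w 1) z 1
    + fderiv ℝ (fun w => fderiv ℝ u w Complex.I) z Complex.I

lemma cs_aux' (a b c d : ℂ) :
    (‖a‖ ^ 2 + ‖c‖ ^ 2) * (‖b‖ ^ 2 + ‖d‖ ^ 2)
        - ‖a * conj b + c * conj d‖ ^ 2 = Complex.normSq (a * d - c * b) := by
  simp only [Complex.sq_norm, Complex.normSq_apply, Complex.mul_re, Complex.mul_im,
    Complex.add_re, Complex.add_im, Complex.sub_re, Complex.sub_im, Complex.conj_re,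
    Complex.conj_im]
  ring

lemma fderiv_u_eq (F G : ℂ → ℂ) (w : ℂ) (hFd : HasDerivAt F (deriv F w) w)
    (hGd : HasDerivAt G (deriv G w) w)
    (hφ : 0 < (F w * conj (F w) + G w * conj (G w)).re) (v : ℂ) :
    fderiv ℝ (fun y => Real.log ((F y * conj (F y) + G y * conj (G y)).re) / 2) w v
      = ((conj (F w) * deriv F w + conj (G w) * deriv G w) * v).re
        / (F w * conj (F w) + G w * conj (G w)).re := by
  have hFr := hFd.hasFDerivAt.restrictScalars ℝ
  have hGr := hGd.hasFDerivAt.restrictScalars ℝ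
  have hFc : HasFDerivAt (fun y => conj (F y))
      (Complex.conjCLE.toContinuousLinearMap.comp
        (((1 : ℂ →L[ℂ] ℂ).smulRight (deriv F w)).restrictScalars ℝ)) w := by
    exact
      (Complex.conjCLE.toContinuousLinearMap.hasFDerivAt (x := F w)).comp w hFr
  have hGc : HasFDerivAt (fun y => conj (G y))
      (Complex.conjCLE.toContinuousLinearMap.comp
        (((1 : ℂ →L[ℂ] ℂ).smulRight (deriv G w)).restrictScalars ℝ)) w := by
    exact
      (Complex.conjCLE.toContinuousLinearMap.hasFDerivAt (x := G w)).comp w hGr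
  have hB := (hFr.mul hFc).add (hGr.mul hGc)
  have hφd : HasFDerivAt (fun y => (F y * conj (F y) + G y * conj (G y)).re)
      (Complex.reCLM.comp
        (F w • (Complex.conjCLE.toContinuousLinearMap.comp
            (((1 : ℂ →L[ℂ] ℂ).smulRight (deriv F w)).restrictScalars ℝ))
          + conj (F w) • (((1 : ℂ →L[ℂ] ℂ).smulRight (deriv F w)).restrictScalars ℝ)
          + (G w • (Complex.conjCLE.toContinuousLinearMap.comp
              (((1 : ℂ →L[ℂ] ℂ).smulRight (deriv G w)).restrictScalars ℝ))
            + conj (G w) • (((1 : ℂ →L[ℂ] ℂ).smulRight (deriv G w)).restrictScalars ℝ)))) w := by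
    exact (Complex.reCLM.hasFDerivAt).comp w hB
  have hu : HasFDerivAt
      (fun y => Real.log ((F y * conj (F y) + G y * conj (G y)).re) / 2)
      ((2:ℝ)⁻¹ • (((F w * conj (F w) + G w * conj (G w)).re)⁻¹ • (Complex.reCLM.comp
        (F w • (Complex.conjCLE.toContinuousLinearMap.comp
            (((1 : ℂ →L[ℂ] ℂ).smulRight (deriv F w)).restrictScalars ℝ))
          + conj (F w) • (((1 : ℂ →L[ℂ] ℂ).smulRight (deriv F w)).restrictScalars ℝ)
          + (G w • (Complex.conjCLE.toContinuousLinearMap.comp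
              (((1 : ℂ →L[ℂ] ℂ).smulRight (deriv G w)).restrictScalars ℝ))
            + conj (G w) • (((1 : ℂ →L[ℂ] ℂ).smulRight (deriv G w)).restrictScalars ℝ)))))) w := by
    have := (hφd.log hφ.ne').const_smul (2:ℝ)⁻¹
    simpa [Pi.smul_def, smul_eq_mul, inv_mul_eq_div] using this
  have hpos : 0 < (F w).re ^ 2 + (F w).im ^ 2 + (G w).re ^ 2 + (G w).im ^ 2 := by
    have h := hφ
    simp [Complex.add_re, Complex.mul_re, Complex.conj_re, Complex.conj_im] at h
    nlinarith [h]
  rw [hu.fderiv]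
  simp [smul_eq_mul, Complex.mul_re, Complex.mul_im, Complex.conj_re, Complex.conj_im]
  rw [div_eq_mul_inv]
  ring

set_option maxHeartbeats 2000000 in
lemma lap_sum (F G : ℂ → ℂ) (z : ℂ)
    (hFd : HasDerivAt F (deriv F z) z) (hGd : HasDerivAt G (deriv G z) z)
    (hF2 : HasDerivAt (deriv F) (deriv (deriv F) z) z)
    (hG2 : HasDerivAt (deriv G) (deriv (deriv G) z) z)
    (hφ : 0 < (F z * conj (F z) + G z * conj (G z)).re) :
    (fderiv ℝ (fun w => ((conj (F w) * deriv F w + conj (G w) * deriv G w) * 1).re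
        * ((F w * conj (F w) + G w * conj (G w)).re)⁻¹) z) 1
    + (fderiv ℝ (fun w => ((conj (F w) * deriv F w + conj (G w) * deriv G w) * Complex.I).re
        * ((F w * conj (F w) + G w * conj (G w)).re)⁻¹) z) Complex.I
    = 2 * ((‖deriv F z‖ ^ 2 + ‖deriv G z‖ ^ 2)
              * (‖F z‖ ^ 2 + ‖G z‖ ^ 2)
            - ‖deriv F z * conj (F z) + deriv G z * conj (G z)‖ ^ 2)
          / (‖F z‖ ^ 2 + ‖G z‖ ^ 2) ^ 2 := by
  have hFr := hFd.hasFDerivAt.restrictScalars ℝ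
  have hGr := hGd.hasFDerivAt.restrictScalars ℝ
  have hF2r := hF2.hasFDerivAt.restrictScalars ℝ
  have hG2r := hG2.hasFDerivAt.restrictScalars ℝ
  have hFc : HasFDerivAt (fun y => conj (F y))
      (Complex.conjCLE.toContinuousLinearMap.comp
        (((1 : ℂ →L[ℂ] ℂ).smulRight (deriv F z)).restrictScalars ℝ)) z := by
    exact
      (Complex.conjCLE.toContinuousLinearMap.hasFDerivAt (x := F z)).comp z hFr
  have hGc : HasFDerivAt (fun y => conj (G y))
      (Complex.conjCLE.toContinuousLinearMap.comp
        (((1 : ℂ →L[ℂ] ℂ).smulRight (deriv G z)).restrictScalars ℝ)) z := by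
    exact
      (Complex.conjCLE.toContinuousLinearMap.hasFDerivAt (x := G z)).comp z hGr
  have hB := (hFr.mul hFc).add (hGr.mul hGc)
  have hφd : HasFDerivAt (fun w => (F w * conj (F w) + G w * conj (G w)).re) _ z :=
    (Complex.reCLM.hasFDerivAt).comp z hB
  have hinv : HasFDerivAt (fun w => ((F w * conj (F w) + G w * conj (G w)).re)⁻¹) _ z :=
    ((hasDerivAt_inv hφ.ne').hasFDerivAt).comp z hφd
  have hA := (hFc.mul hF2r).add (hGc.mul hG2r)
  have hnum1 : HasFDerivAt
      (fun w => (((conj (F w) * deriv F w + conj (G w) * deriv G w) * 1)).re) _ z :=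
    (Complex.reCLM.hasFDerivAt).comp z (hA.mul_const 1)
  have hnumI : HasFDerivAt
      (fun w => (((conj (F w) * deriv F w + conj (G w) * deriv G w) * Complex.I)).re) _ z :=
    (Complex.reCLM.hasFDerivAt).comp z (hA.mul_const Complex.I)
  have hh1 : HasFDerivAt (fun w => ((conj (F w) * deriv F w + conj (G w) * deriv G w) * 1).re
      * ((F w * conj (F w) + G w * conj (G w)).re)⁻¹) _ z := hnum1.mul hinv
  have hhI : HasFDerivAt (fun w => ((conj (F w) * deriv F w + conj (G w) * deriv G w) * Complex.I).re
      * ((F w * conj (F w) + G w * conj (G w)).re)⁻¹) _ z := hnumI.mul hinv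
  rw [hh1.fderiv, hhI.fderiv]
  rw [show ‖F z‖ ^ 2 + ‖G z‖ ^ 2
      = (F z * conj (F z) + G z * conj (G z)).re from by
    simp [Complex.mul_conj, Complex.sq_norm]]
  set s := (F z * conj (F z) + G z * conj (G z)).re with hs
  have hs0 : s ≠ 0 := ne_of_gt hφ
  simp only [ContinuousLinearMap.add_apply, ContinuousLinearMap.coe_smul',
    ContinuousLinearMap.coe_comp', Function.comp_apply, ContinuousLinearMap.smulRight_apply,
    ContinuousLinearMap.one_apply, ContinuousLinearMap.coe_restrictScalars',
    Complex.conjCLE_apply, Complex.reCLM_apply, Pi.smul_apply, one_smul, smul_eq_mul,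
    ContinuousLinearEquiv.coe_coe, ContinuousLinearMap.toSpanSingleton_apply]
  simp only [Complex.sq_norm, Complex.normSq_apply, Complex.mul_re, Complex.mul_im,
    Complex.add_re, Complex.add_im, Complex.conj_re, Complex.conj_im, Complex.I_re,
    Complex.I_im, Complex.one_re, Complex.one_im, mul_one, mul_zero, zero_mul, sub_zero, zero_sub, add_zero, zero_add]
  field_simp
  ring

/-- At every point where `(F, G) ≠ (0,0)`, the Cauchy–Schwarz expression
`(|F'|²+|G'|²)(|F|²+|G|²) − |F'·conj F + G'·conj G|²` is nonnegative, and the Laplacian of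
`log(|F|²+|G|²)/2` equals `2` times this expression divided by `(|F|²+|G|²)²`, hence is
nonnegative. -/
theorem laplacian_log_nonneg (F G : ℂ → ℂ)
    (hF : DifferentiableOn ℂ F (Metric.ball 0 1))
    (hG : DifferentiableOn ℂ G (Metric.ball 0 1))
    (z : ℂ) (hz : z ∈ Metric.ball (0:ℂ) 1)
    (hne : ¬ (F z = 0 ∧ G z = 0)) :
    0 ≤ (‖deriv F z‖ ^ 2 + ‖deriv G z‖ ^ 2)
          * (‖F z‖ ^ 2 + ‖G z‖ ^ 2)
        - ‖deriv F z * conj (F z) + deriv G z * conj (G z)‖ ^ 2 ∧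
    laplacian (fun w => Real.log (‖F w‖ ^ 2 + ‖G w‖ ^ 2) / 2) z
      = 2 * ((‖deriv F z‖ ^ 2 + ‖deriv G z‖ ^ 2)
              * (‖F z‖ ^ 2 + ‖G z‖ ^ 2)
            - ‖deriv F z * conj (F z) + deriv G z * conj (G z)‖ ^ 2)
          / (‖F z‖ ^ 2 + ‖G z‖ ^ 2) ^ 2 ∧
    0 ≤ laplacian
      (fun w => Real.log (‖F w‖ ^ 2 + ‖G w‖ ^ 2) / 2) z := by
  -- Cauchy–Schwarz part
  have hcs : 0 ≤ (‖deriv F z‖ ^ 2 + ‖deriv G z‖ ^ 2)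
          * (‖F z‖ ^ 2 + ‖G z‖ ^ 2)
        - ‖deriv F z * conj (F z) + deriv G z * conj (G z)‖ ^ 2 := by
    rw [show ‖deriv F z * conj (F z) + deriv G z * conj (G z)‖
        = ‖deriv F z * conj (F z) + deriv G z * conj (G z)‖ from rfl]
    rw [cs_aux' (deriv F z) (F z) (deriv G z) (G z)]
    exact Complex.normSq_nonneg _
  have hφz : 0 < (F z * conj (F z) + G z * conj (G z)).re := by
    rw [Complex.mul_conj, Complex.mul_conj]
    rcases not_and_or.mp hne with h | h
    · simpa using add_pos_of_pos_of_nonneg (Complex.normSq_pos.mpr h) (Complex.normSq_nonneg (G z))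
    · simpa using add_pos_of_nonneg_of_pos (Complex.normSq_nonneg (F z)) (Complex.normSq_pos.mpr h)
  have hcont : ContinuousOn (fun w => (F w * conj (F w) + G w * conj (G w)).re)
      (Metric.ball (0:ℂ) 1) :=
    Complex.continuous_re.comp_continuousOn
      ((hF.continuousOn.mul (Complex.continuous_conj.comp_continuousOn hF.continuousOn)).add
        (hG.continuousOn.mul (Complex.continuous_conj.comp_continuousOn hG.continuousOn)))
  have hUopen : IsOpen (Metric.ball (0:ℂ) 1 ∩
      (fun w => (F w * conj (F w) + G w * conj (G w)).re) ⁻¹' Set.Ioi 0) :=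
    hcont.isOpen_inter_preimage isOpen_ball isOpen_Ioi
  have hzU : z ∈ Metric.ball (0:ℂ) 1 ∩
      (fun w => (F w * conj (F w) + G w * conj (G w)).re) ⁻¹' Set.Ioi 0 := ⟨hz, hφz⟩
  have hUn : (Metric.ball (0:ℂ) 1 ∩
      (fun w => (F w * conj (F w) + G w * conj (G w)).re) ⁻¹' Set.Ioi 0) ∈ 𝓝 z :=
    hUopen.mem_nhds hzU
  have hderF : ∀ w ∈ Metric.ball (0:ℂ) 1, HasDerivAt F (deriv F w) w := fun w hw =>
    ((hF w hw).differentiableAt (isOpen_ball.mem_nhds hw)).hasDerivAt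
  have hderG : ∀ w ∈ Metric.ball (0:ℂ) 1, HasDerivAt G (deriv G w) w := fun w hw =>
    ((hG w hw).differentiableAt (isOpen_ball.mem_nhds hw)).hasDerivAt
  have hF2on : DifferentiableOn ℂ (deriv F) (Metric.ball (0:ℂ) 1) :=
    ((hF.analyticOnNhd isOpen_ball).deriv).differentiableOn
  have hG2on : DifferentiableOn ℂ (deriv G) (Metric.ball (0:ℂ) 1) :=
    ((hG.analyticOnNhd isOpen_ball).deriv).differentiableOn
  have hderF2 : HasDerivAt (deriv F) (deriv (deriv F) z) z :=
    ((hF2on z hz).differentiableAt (isOpen_ball.mem_nhds hz)).hasDerivAt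
  have hderG2 : HasDerivAt (deriv G) (deriv (deriv G) z) z :=
    ((hG2on z hz).differentiableAt (isOpen_ball.mem_nhds hz)).hasDerivAt
  have hufun : (fun w => Real.log (‖F w‖ ^ 2 + ‖G w‖ ^ 2) / 2)
      = fun w => Real.log ((F w * conj (F w) + G w * conj (G w)).re) / 2 := by
    funext w
    rw [Complex.mul_conj, Complex.mul_conj]
    simp [Complex.sq_norm]
  have h1 : (fun w => fderiv ℝ
        (fun y => Real.log ((F y * conj (F y) + G y * conj (G y)).re) / 2) w 1)
      =ᶠ[𝓝 z] fun w => ((conj (F w) * deriv F w + conj (G w) * deriv G w) * 1).re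
        * ((F w * conj (F w) + G w * conj (G w)).re)⁻¹ := by
    filter_upwards [hUn] with w hw
    rw [fderiv_u_eq F G w (hderF w hw.1) (hderG w hw.1) hw.2 1, div_eq_mul_inv]
  have hI : (fun w => fderiv ℝ
        (fun y => Real.log ((F y * conj (F y) + G y * conj (G y)).re) / 2) w Complex.I)
      =ᶠ[𝓝 z] fun w => ((conj (F w) * deriv F w + conj (G w) * deriv G w) * Complex.I).re
        * ((F w * conj (F w) + G w * conj (G w)).re)⁻¹ := by
    filter_upwards [hUn] with w hw
    rw [fderiv_u_eq F G w (hderF w hw.1) (hderG w hw.1) hw.2 Complex.I, div_eq_mul_inv]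
  have heq : laplacian
      (fun w => Real.log (‖F w‖ ^ 2 + ‖G w‖ ^ 2) / 2) z
      = 2 * ((‖deriv F z‖ ^ 2 + ‖deriv G z‖ ^ 2)
              * (‖F z‖ ^ 2 + ‖G z‖ ^ 2)
            - ‖deriv F z * conj (F z) + deriv G z * conj (G z)‖ ^ 2)
          / (‖F z‖ ^ 2 + ‖G z‖ ^ 2) ^ 2 := by
    rw [hufun, laplacian, h1.fderiv_eq, hI.fderiv_eq]
    exact lap_sum F G z (hderF z hz) (hderG z hz) hderF2 hderG2 hφz
  refine ⟨hcs, heq, ?_⟩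
  rw [heq]
  apply div_nonneg (by linarith) (by positivity)
end
end

section
/- Let f : 𝔹 → ℍ be a slice regular function on the quaternionic unit ball, 1 ≤ p ≤ ∞, and suppose for some imaginary unit J ∈ 𝕊 the slice p-norm ‖f_J‖_p = lim_{r→1⁻} ((1/2π)∫|f(re^{Jθ})|^p dθ)^{1/p} is finite. Then the full norm ‖f‖_p = sup_{I∈𝕊} ‖f_I‖_p satisfies ‖f_J‖_p ≤ ‖f‖_p ≤ 2‖f_J‖_p. -/
set_option maxHeartbeats 1000000


open MeasureTheory Metric Filter Set
open scoped Topology ENNReal Quaternion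

noncomputable section

/-- The 2-sphere of imaginary units in the quaternions. -/
def QSphere : Set ℍ[ℝ] := {q | q ^ 2 = -1}

/-- The open unit ball of the quaternions. -/
def QBall : Set ℍ[ℝ] := Metric.ball 0 1

/-- The point `x + yI` of the slice `L_I = ℝ + ℝI`. -/
def slicePt (I : ℍ[ℝ]) (x y : ℝ) : ℍ[ℝ] := (x : ℍ[ℝ]) + y • I

/-- A function `f : 𝔹 → ℍ` (given on all of `ℍ`, its values outside the unit ball being
irrelevant) is slice regular on the unit ball if, for every imaginary unit `I`, the
restriction of `f` to the slice `𝔹_I` is (real-)differentiable and satisfies the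
Cauchy–Riemann equation `∂f/∂x + I ∂f/∂y = 0`. -/
def SliceRegular (f : ℍ[ℝ] → ℍ[ℝ]) : Prop :=
  ∀ I ∈ QSphere, ∀ p : ℝ × ℝ, p.1 ^ 2 + p.2 ^ 2 < 1 →
    DifferentiableAt ℝ (fun w : ℝ × ℝ => f (slicePt I w.1 w.2)) p ∧
    fderiv ℝ (fun w : ℝ × ℝ => f (slicePt I w.1 w.2)) p (1, 0)
      + I * fderiv ℝ (fun w : ℝ × ℝ => f (slicePt I w.1 w.2)) p (0, 1) = 0

/-- The point `r e^{Iθ}` of the slice `L_I`. -/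
def circlePt (I : ℍ[ℝ]) (r θ : ℝ) : ℍ[ℝ] := slicePt I (r * Real.cos θ) (r * Real.sin θ)

/-- The integral mean `M_p(f_I, r) = ((1/2π) ∫ |f(re^{Iθ})|^p dθ)^{1/p}`. -/
def sliceMp (f : ℍ[ℝ] → ℍ[ℝ]) (I : ℍ[ℝ]) (p r : ℝ) : ℝ≥0∞ :=
  ENNReal.ofReal
    (((1 / (2 * Real.pi)) * ∫ θ in (0:ℝ)..(2 * Real.pi), ‖f (circlePt I r θ)‖ ^ p) ^ (1 / p))

/-- The slice `p`-norm `‖f_I‖_p = lim_{r→1⁻} M_p(f_I, r)`; since `r ↦ M_p(f_I,r)` is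
increasing for slice regular `f`, the limit equals the supremum over `r ∈ [0,1)`. -/
def sliceNorm (f : ℍ[ℝ] → ℍ[ℝ]) (I : ℍ[ℝ]) (p : ℝ) : ℝ≥0∞ :=
  ⨆ r ∈ Set.Ico (0:ℝ) 1, sliceMp f I p r

/-- The slice `p`-norm for an extended exponent `p ∈ (0,∞]`; for `p = ∞` it is the sup norm
on the slice. -/
def sliceNormE (f : ℍ[ℝ] → ℍ[ℝ]) (I : ℍ[ℝ]) (p : ℝ≥0∞) : ℝ≥0∞ :=
  if p = ⊤ then
    ⨆ (w : ℝ × ℝ) (_ : w.1 ^ 2 + w.2 ^ 2 < 1), ENNReal.ofReal ‖f (slicePt I w.1 w.2)‖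
  else sliceNorm f I p.toReal

/-- The quaternionic Hardy norm `‖f‖_p = sup_{I∈𝕊} ‖f_I‖_p` (for `p = ∞` this is the sup
norm on the ball). -/
def hardyNorm (f : ℍ[ℝ] → ℍ[ℝ]) (p : ℝ≥0∞) : ℝ≥0∞ :=
  ⨆ I ∈ QSphere, sliceNormE f I p

/-- Membership in the quaternionic Hardy space `H^p(𝔹)`. -/
def MemHp (f : ℍ[ℝ] → ℍ[ℝ]) (p : ℝ≥0∞) : Prop :=
  SliceRegular f ∧ hardyNorm f p < ⊤

lemma qs_facts (I : ℍ[ℝ]) (hI : I ^ 2 = -1) :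
    I.re = 0 ∧ I.imI^2 + I.imJ^2 + I.imK^2 = 1 := by
  have h := hI
  rw [sq, Quaternion.ext_iff] at h
  simp only [Quaternion.re_mul, Quaternion.imI_mul, Quaternion.imJ_mul, Quaternion.imK_mul,
    Quaternion.re_neg, Quaternion.imI_neg, Quaternion.imJ_neg, Quaternion.imK_neg,
    Quaternion.re_one, Quaternion.imI_one, Quaternion.imJ_one, Quaternion.imK_one,
    neg_zero] at h
  obtain ⟨h1, h2, h3, h4⟩ := h
  have hre : I.re = 0 := by
    by_contra hne
    have hb : I.imI = 0 := by
      have : I.re * I.imI = 0 := by linarith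
      exact (mul_eq_zero.1 this).resolve_left hne
    have hc : I.imJ = 0 := by
      have : I.re * I.imJ = 0 := by nlinarith
      exact (mul_eq_zero.1 this).resolve_left hne
    have hd : I.imK = 0 := by
      have : I.re * I.imK = 0 := by nlinarith
      exact (mul_eq_zero.1 this).resolve_left hne
    rw [hb, hc, hd] at h1; nlinarith
  exact ⟨hre, by nlinarith⟩

lemma qs_norm_one (I : ℍ[ℝ]) (hI : I ^ 2 = -1) : ‖I‖ = 1 := by
  obtain ⟨h0, h1⟩ := qs_facts I hI
  have : ‖I‖ * ‖I‖ = 1 := by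
    rw [← Quaternion.normSq_eq_norm_mul_self, Quaternion.normSq_def']
    nlinarith
  nlinarith [norm_nonneg I]

lemma norm_slicePt (I : ℍ[ℝ]) (hI : I ^ 2 = -1) (x y : ℝ) :
    ‖(x : ℍ[ℝ]) + y • I‖ = Real.sqrt (x^2 + y^2) := by
  obtain ⟨h0, h1⟩ := qs_facts I hI
  have : ‖(x : ℍ[ℝ]) + y • I‖ * ‖(x : ℍ[ℝ]) + y • I‖ = x^2+y^2 := by
    rw [← Quaternion.normSq_eq_norm_mul_self, Quaternion.normSq_def']
    simp [Quaternion.re_add, Quaternion.re_smul, h0]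
    nlinarith
  rw [← Real.sqrt_mul_self (norm_nonneg _), this]

lemma rep_formula (f : ℍ[ℝ] → ℍ[ℝ]) (hf : SliceRegular f) {I J : ℍ[ℝ]}
    (hI : I ∈ QSphere) (hJ : J ∈ QSphere) {x y : ℝ} (hxy : x ^ 2 + y ^ 2 < 1) :
    f (slicePt I x y) = (2⁻¹ : ℝ) • (f (slicePt J x y) + f (slicePt J x (-y)))
      + (I * J) * ((2⁻¹ : ℝ) • (f (slicePt J x (-y)) - f (slicePt J x y))) := by
  have hIsq : I ^ 2 = -1 := hI
  have hJsq : J ^ 2 = -1 := hJ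
  have hI2 : I * I = -1 := by rw [← sq]; exact hIsq
  have hJ2 : J * J = -1 := by rw [← sq]; exact hJsq
  have hnorm : ∀ z : ℂ, ‖Complex.liftAux I hI2 z‖ = ‖z‖ := by
    intro z
    rw [Complex.liftAux_apply]
    have : (algebraMap ℝ ℍ[ℝ] z.re) = ((z.re : ℝ) : ℍ[ℝ]) := rfl
    rw [this, norm_slicePt I hIsq]
    rw [Complex.norm_def, Complex.normSq_apply]
    ring_nf
  letI : Module ℂ ℍ[ℝ] := Module.compHom _ (Complex.liftAux I hI2).toRingHom
  haveI : IsScalarTower ℝ ℂ ℍ[ℝ] := ⟨fun r z q => by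
    show (Complex.liftAux I hI2) (r • z) * q = r • ((Complex.liftAux I hI2) z * q)
    rw [_root_.map_smul, smul_mul_assoc]⟩
  letI : NormedSpace ℂ ℍ[ℝ] := ⟨fun z q => by
    show ‖(Complex.liftAux I hI2) z * q‖ ≤ ‖z‖ * ‖q‖
    rw [norm_mul, hnorm]⟩
  have holo : ∀ (F : ℂ → ℍ[ℝ]) (z : ℂ) (D : ℂ →L[ℝ] ℍ[ℝ]), HasFDerivAt F D z →
      D Complex.I = I * D 1 → DifferentiableAt ℂ F z := by
    intro F z D hD hCR
    set d : ℍ[ℝ] := D 1 with hd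
    let g' : ℂ →L[ℂ] ℍ[ℝ] := ContinuousLinearMap.smulRight (1 : ℂ →L[ℂ] ℂ) d
    have hres : g'.restrictScalars ℝ = D := by
      refine ContinuousLinearMap.ext fun w => ?_
      show w • d = D w
      show (Complex.liftAux I hI2) w * d = D w
      rw [Complex.liftAux_apply]
      have hw : w = (w.re : ℂ) + w.im • Complex.I := by
        simp [Complex.real_smul, Complex.re_add_im]
      calc (algebraMap ℝ ℍ[ℝ] w.re + w.im • I) * d
          = w.re • d + w.im • (I * d) := by
            rw [add_mul, smul_mul_assoc, Algebra.algebraMap_eq_smul_one, smul_mul_assoc, one_mul]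
        _ = w.re • D 1 + w.im • D Complex.I := by rw [hCR, hd]
        _ = D ((w.re : ℂ) + w.im • Complex.I) := by
            rw [map_add, _root_.map_smul]
            congr 1
            rw [show ((w.re:ℂ)) = w.re • (1:ℂ) by simp [Complex.real_smul], _root_.map_smul]
        _ = D w := by rw [← hw]
    exact (hasFDerivAt_of_restrictScalars ℝ hD hres).differentiableAt
  -- the continuous linear maps ℂ → ℝ × ℝ
  set eC : ℂ →L[ℝ] ℝ × ℝ := Complex.equivRealProdCLM.toContinuousLinearMap with heC
  set N : ℂ →L[ℝ] ℂ := Complex.conjCLE.toContinuousLinearMap with hN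
  have heC1 : eC 1 = (1, 0) := by simp [heC]
  have heCI : eC Complex.I = (0, 1) := by simp [heC]
  have hball : ∀ z : ℂ, z ∈ ball (0:ℂ) 1 → z.re ^ 2 + z.im ^ 2 < 1 := by
    intro z hz
    rw [mem_ball_zero_iff] at hz
    have h2 : ‖z‖^2 = z.re^2 + z.im^2 := by
      rw [Complex.sq_norm, Complex.normSq_apply]; ring
    nlinarith [norm_nonneg z]
  -- F
  set F : ℂ → ℍ[ℝ] := fun z => f (slicePt I z.re z.im) with hF
  have hFdiff : ∀ z ∈ ball (0:ℂ) 1, DifferentiableAt ℂ F z := by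
    intro z hz
    obtain ⟨hdiff, hCR⟩ := hf I hI (z.re, z.im) (hball z hz)
    set Φ : ℝ × ℝ → ℍ[ℝ] := fun w => f (slicePt I w.1 w.2) with hΦ
    set D : (ℝ × ℝ) →L[ℝ] ℍ[ℝ] := fderiv ℝ Φ (z.re, z.im) with hD
    have hD' : HasFDerivAt Φ D (z.re, z.im) := hdiff.hasFDerivAt
    have heCz : eC z = (z.re, z.im) := by simp [heC]
    have hD'' : HasFDerivAt Φ D (eC z) := heCz ▸ hD'
    have hcomp0 : HasFDerivAt (Φ ∘ eC) (D.comp eC) z := hD''.comp z eC.hasFDerivAt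
    have hcomp : HasFDerivAt F (D.comp eC) z := by
      refine hcomp0.congr_of_eventuallyEq (Eventually.of_forall fun w => ?_)
      simp [hF, hΦ, Function.comp, heC]
    refine holo F z (D.comp eC) hcomp ?_
    have key : D (1,0) + I * D (0,1) = 0 := hCR
    have : I * D (1,0) + I * (I * D (0,1)) = 0 := by
      rw [← mul_add, key, mul_zero]
    rw [← mul_assoc, hI2, neg_one_mul, add_comm] at this
    have hval : D (0,1) = I * D (1,0) := (neg_add_eq_zero.mp this)
    simp only [ContinuousLinearMap.comp_apply, heC1, heCI]
    exact hval
  -- G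
  set Φ : ℝ × ℝ → ℍ[ℝ] := fun w => f (slicePt J w.1 w.2) with hΦ
  set G : ℂ → ℍ[ℝ] := fun z => (2⁻¹ : ℝ) • (Φ (z.re, z.im) + Φ (z.re, -z.im))
      + (I * J) * ((2⁻¹ : ℝ) • (Φ (z.re, -z.im) - Φ (z.re, z.im))) with hG
  have hGdiff : ∀ z ∈ ball (0:ℂ) 1, DifferentiableAt ℂ G z := by
    intro z hz
    have hz2 := hball z hz
    have hp1 : (z.re, z.im).1 ^ 2 + (z.re, z.im).2 ^ 2 < 1 := hz2
    have hp2 : (z.re, -z.im).1 ^ 2 + (z.re, -z.im).2 ^ 2 < 1 := by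
      simpa using hz2
    obtain ⟨hdiff1, hCR1⟩ := hf J hJ (z.re, z.im) hp1
    obtain ⟨hdiff2, hCR2⟩ := hf J hJ (z.re, -z.im) hp2
    set D1 : (ℝ × ℝ) →L[ℝ] ℍ[ℝ] := fderiv ℝ Φ (z.re, z.im) with hD1d
    set D2 : (ℝ × ℝ) →L[ℝ] ℍ[ℝ] := fderiv ℝ Φ (z.re, -z.im) with hD2d
    have hD1 : HasFDerivAt Φ D1 (z.re, z.im) := hdiff1.hasFDerivAt
    have hD2 : HasFDerivAt Φ D2 (z.re, -z.im) := hdiff2.hasFDerivAt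
    set M : ℂ →L[ℝ] ℝ × ℝ := eC.comp N with hM
    have hMapp : ∀ w : ℂ, M w = (w.re, -w.im) := by
      intro w; simp [hM, hN, heC, Complex.conjCLE_apply]
    have h1 : HasFDerivAt (fun w : ℂ => Φ (w.re, w.im)) (D1.comp eC) z := by
      have := ((show eC z = (z.re, z.im) by simp [heC]) ▸ hD1 : HasFDerivAt Φ D1 (eC z)).comp z eC.hasFDerivAt
      refine this.congr_of_eventuallyEq (Eventually.of_forall fun w => ?_)
      simp [Function.comp, heC]
    have h2 : HasFDerivAt (fun w : ℂ => Φ (w.re, -w.im)) (D2.comp M) z := by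
      have hpt : M z = (z.re, -z.im) := hMapp z
      have hinner : HasFDerivAt (fun w : ℂ => M w) M z := M.hasFDerivAt
      have := (hpt ▸ hD2 : HasFDerivAt Φ D2 (M z)).comp z hinner
      refine this.congr_of_eventuallyEq (Eventually.of_forall fun w => ?_)
      simp [Function.comp, hMapp w]
    have hsum : HasFDerivAt G
        ((2⁻¹:ℝ) • (D1.comp eC + D2.comp M) + (I*J) • ((2⁻¹:ℝ) • (D2.comp M - D1.comp eC))) z := by
      exact ((h1.add h2).const_smul (2⁻¹:ℝ)).add (((h2.sub h1).const_smul (2⁻¹:ℝ)).const_mul (I*J))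
    refine holo G z _ hsum ?_
    -- evaluate
    have e1 : (D1.comp eC) (1:ℂ) = D1 (1,0) := by rw [ContinuousLinearMap.comp_apply, heC1]
    have eI : (D1.comp eC) Complex.I = D1 (0,1) := by rw [ContinuousLinearMap.comp_apply, heCI]
    have f1 : (D2.comp M) (1:ℂ) = D2 (1,0) := by
      rw [ContinuousLinearMap.comp_apply, hMapp 1]; norm_num
    have fI : (D2.comp M) Complex.I = -D2 (0,1) := by
      rw [ContinuousLinearMap.comp_apply, hMapp Complex.I]
      have : ((Complex.I.re, -Complex.I.im) : ℝ × ℝ) = -((0,1) : ℝ × ℝ) := by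
        simp [Prod.ext_iff]
      rw [this, map_neg]
    set a := D1 (1,0) with hadef
    set b := D1 (0,1) with hbdef
    set a' := D2 (1,0) with ha'def
    set b' := D2 (0,1) with hb'def
    have ha : a = -(J*b) := eq_neg_of_add_eq_zero_left hCR1
    have ha' : a' = -(J*b') := eq_neg_of_add_eq_zero_left hCR2
    have hII : ∀ u : ℍ[ℝ], I * (I * u) = -u := fun u => by
      rw [← mul_assoc, hI2, neg_one_mul]
    have hJJ : ∀ u : ℍ[ℝ], J * (J * u) = -u := fun u => by
      rw [← mul_assoc, hJ2, neg_one_mul]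
    simp only [ContinuousLinearMap.add_apply, ContinuousLinearMap.smul_apply,
      ContinuousLinearMap.sub_apply, e1, eI, f1, fI, smul_eq_mul]
    rw [ha, ha']
    simp only [smul_add, smul_sub, smul_neg, neg_neg, mul_add, mul_sub, mul_neg,
      mul_smul_comm, mul_assoc, hII, hJJ]
    abel
  -- identity theorem
  have hFa : AnalyticOnNhd ℂ F (ball 0 1) :=
    DifferentiableOn.analyticOnNhd (fun z hz => (hFdiff z hz).differentiableWithinAt) isOpen_ball
  have hGa : AnalyticOnNhd ℂ G (ball 0 1) :=
    DifferentiableOn.analyticOnNhd (fun z hz => (hGdiff z hz).differentiableWithinAt) isOpen_ball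
  have hreal : ∀ t : ℝ, F (t:ℂ) = G (t:ℂ) := by
    intro t
    have h1 : ((t:ℂ)).re = t := Complex.ofReal_re t
    have h2 : ((t:ℂ)).im = 0 := Complex.ofReal_im t
    simp only [hF, hG, hΦ, h1, h2, neg_zero]
    have hsl : slicePt I t 0 = slicePt J t 0 := by simp [slicePt]
    rw [hsl, sub_self, smul_zero, mul_zero, add_zero, ← two_smul ℝ (f (slicePt J t 0)), smul_smul]
    norm_num
  have hseq : Tendsto (fun n : ℕ => ((((n:ℝ)+2)⁻¹ : ℝ) : ℂ)) atTop (𝓝[≠] (0:ℂ)) := by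
    refine tendsto_nhdsWithin_of_tendsto_nhds_of_eventually_within _ ?_ ?_
    · have h0 : Tendsto (fun n : ℕ => ((n:ℝ)+2)⁻¹) atTop (𝓝 0) :=
        tendsto_inv_atTop_zero.comp (tendsto_atTop_add_const_right _ 2 tendsto_natCast_atTop_atTop)
      have h1 := (Complex.continuous_ofReal.tendsto 0).comp h0
      rw [Complex.ofReal_zero] at h1
      exact h1
    · refine Eventually.of_forall fun n => ?_
      simp only [mem_compl_iff, mem_singleton_iff]
      refine Complex.ofReal_ne_zero.mpr ?_
      positivity
  have hfreq : ∃ᶠ z in 𝓝[≠] (0:ℂ), F z = G z :=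
    hseq.frequently (Frequently.of_forall fun n => hreal _)
  have hEqOn : EqOn F G (ball 0 1) :=
    hFa.eqOn_of_preconnected_of_frequently_eq hGa (convex_ball (0:ℂ) 1).isPreconnected
      (mem_ball_self one_pos) hfreq
  have hz0 : (⟨x, y⟩ : ℂ) ∈ ball (0:ℂ) 1 := by
    rw [mem_ball_zero_iff]
    have h2 : ‖(⟨x,y⟩:ℂ)‖^2 = x^2 + y^2 := by
      rw [Complex.sq_norm, Complex.normSq_apply]
      ring
    nlinarith [norm_nonneg (⟨x,y⟩:ℂ)]
  exact hEqOn hz0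

lemma pointwise_bound (f : ℍ[ℝ] → ℍ[ℝ]) (hf : SliceRegular f) {I J : ℍ[ℝ]}
    (hI : I ∈ QSphere) (hJ : J ∈ QSphere) {x y : ℝ} (hxy : x ^ 2 + y ^ 2 < 1) :
    ‖f (slicePt I x y)‖ ≤ ‖f (slicePt J x y)‖ + ‖f (slicePt J x (-y))‖ := by
  rw [rep_formula f hf hI hJ hxy]
  have hIJ : ‖I * J‖ = 1 := by
    rw [norm_mul, qs_norm_one I hI, qs_norm_one J hJ, one_mul]
  set a := f (slicePt J x y)
  set b := f (slicePt J x (-y))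
  calc ‖(2⁻¹:ℝ) • (a + b) + (I*J) * ((2⁻¹:ℝ) • (b - a))‖
      ≤ ‖(2⁻¹:ℝ) • (a + b)‖ + ‖(I*J) * ((2⁻¹:ℝ) • (b - a))‖ := norm_add_le _ _
    _ = 2⁻¹ * ‖a + b‖ + 2⁻¹ * ‖b - a‖ := by
        rw [norm_mul, hIJ, one_mul, norm_smul, norm_smul]
        norm_num
    _ ≤ 2⁻¹ * (‖a‖ + ‖b‖) + 2⁻¹ * (‖b‖ + ‖a‖) := by
        have h1 := norm_add_le a b
        have h2 := norm_sub_le b a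
        nlinarith
    _ = ‖a‖ + ‖b‖ := by ring

lemma cont_circle (f : ℍ[ℝ] → ℍ[ℝ]) (hf : SliceRegular f) {I : ℍ[ℝ]} (hI : I ∈ QSphere)
    {r : ℝ} (hr : r ∈ Set.Ico (0:ℝ) 1) : Continuous fun θ => f (circlePt I r θ) := by
  have hr2 : r ^ 2 < 1 := by obtain ⟨h0, h1⟩ := hr; nlinarith
  rw [continuous_iff_continuousAt]
  intro θ
  have hin : (r * Real.cos θ) ^ 2 + (r * Real.sin θ) ^ 2 < 1 := by
    have := Real.sin_sq_add_cos_sq θ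
    nlinarith
  have hΦ : ContinuousAt (fun w : ℝ × ℝ => f (slicePt I w.1 w.2)) (r * Real.cos θ, r * Real.sin θ) :=
    (hf I hI _ hin).1.continuousAt
  have hc : ContinuousAt (fun θ : ℝ => (r * Real.cos θ, r * Real.sin θ)) θ := by fun_prop
  have : ContinuousAt ((fun w : ℝ × ℝ => f (slicePt I w.1 w.2)) ∘
      (fun θ : ℝ => (r * Real.cos θ, r * Real.sin θ))) θ :=
    ContinuousAt.comp (g := fun w : ℝ × ℝ => f (slicePt I w.1 w.2))
      (f := fun θ : ℝ => (r * Real.cos θ, r * Real.sin θ)) hΦ hc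
  exact this

lemma lint_eq (g : ℝ → ℍ[ℝ]) (hg : Continuous g) {q : ℝ} (hq : 1 ≤ q) :
    ∫⁻ θ in Set.Ioc 0 (2*Real.pi), ((‖g θ‖₊ : ℝ≥0∞)) ^ q
      = ENNReal.ofReal (∫ θ in (0:ℝ)..(2*Real.pi), ‖g θ‖ ^ q) := by
  have h2π : (0:ℝ) ≤ 2*Real.pi := by positivity
  have hq0 : (0:ℝ) ≤ q := by linarith
  have hcont : Continuous fun θ => ‖g θ‖ ^ q :=
    hg.norm.rpow_const (fun x => Or.inr hq0)
  have hint : MeasureTheory.IntegrableOn (fun θ => ‖g θ‖ ^ q) (Set.Ioc 0 (2*Real.pi)) :=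
    (hcont.integrableOn_Icc (a := 0) (b := 2*Real.pi)).mono_set Set.Ioc_subset_Icc_self
  rw [intervalIntegral.integral_of_le h2π,
    MeasureTheory.ofReal_integral_eq_lintegral_ofReal hint
      (Filter.Eventually.of_forall fun θ => Real.rpow_nonneg (norm_nonneg _) q)]
  refine lintegral_congr fun θ => ?_
  rw [← ENNReal.ofReal_rpow_of_nonneg (norm_nonneg _) hq0]
  congr 1
  exact (ENNReal.ofReal_eq_coe_nnreal (norm_nonneg _)).symm

lemma sliceMp_le (f : ℍ[ℝ] → ℍ[ℝ]) (hf : SliceRegular f) {I J : ℍ[ℝ]}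
    (hI : I ∈ QSphere) (hJ : J ∈ QSphere) {q : ℝ} (hq : 1 ≤ q) {r : ℝ}
    (hr : r ∈ Set.Ico (0:ℝ) 1) :
    sliceMp f I q r ≤ 2 * sliceMp f J q r := by
  have hq0 : (0:ℝ) < q := by linarith
  have hr2 : r ^ 2 < 1 := by obtain ⟨h0, h1⟩ := hr; nlinarith
  set u : ℝ → ℍ[ℝ] := fun θ => f (circlePt J r θ) with hu
  set v : ℝ → ℍ[ℝ] := fun θ => f (circlePt I r θ) with hv
  have hucont : Continuous u := cont_circle f hf hJ hr
  have hvcont : Continuous v := cont_circle f hf hI hr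
  have huneg : Continuous fun θ => u (-θ) := hucont.comp continuous_neg
  -- pointwise bound
  have hpt : ∀ θ, ‖v θ‖ ≤ ‖u θ‖ + ‖u (-θ)‖ := by
    intro θ
    have hin : (r * Real.cos θ) ^ 2 + (r * Real.sin θ) ^ 2 < 1 := by
      have := Real.sin_sq_add_cos_sq θ
      nlinarith
    have h := pointwise_bound f hf hI hJ hin
    show ‖f (circlePt I r θ)‖ ≤ ‖f (circlePt J r θ)‖ + ‖f (circlePt J r (-θ))‖
    simpa only [circlePt, Real.cos_neg, Real.sin_neg, mul_neg] using h
  -- the T functional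
  set T : (ℝ → ℍ[ℝ]) → ℝ≥0∞ :=
    fun g => (∫⁻ θ in Set.Ioc 0 (2*Real.pi), ((‖g θ‖₊ : ℝ≥0∞)) ^ q) ^ (1/q) with hT
  -- Minkowski
  have hmink : T v ≤ T u + T (fun θ => u (-θ)) := by
    have hφ : AEMeasurable (fun θ => ((‖u θ‖₊ : ℝ≥0∞))) 
        (volume.restrict (Set.Ioc 0 (2*Real.pi))) :=
      (ENNReal.continuous_coe.comp hucont.nnnorm).measurable.aemeasurable
    have hψ : AEMeasurable (fun θ => ((‖u (-θ)‖₊ : ℝ≥0∞)))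
        (volume.restrict (Set.Ioc 0 (2*Real.pi))) :=
      (ENNReal.continuous_coe.comp huneg.nnnorm).measurable.aemeasurable
    have h1 : T v ≤ (∫⁻ θ in Set.Ioc 0 (2*Real.pi),
        ((fun θ => ((‖u θ‖₊ : ℝ≥0∞))) + fun θ => ((‖u (-θ)‖₊ : ℝ≥0∞))) θ ^ q) ^ (1/q) := by
      refine ENNReal.rpow_le_rpow ?_ (by positivity)
      refine lintegral_mono fun θ => ?_
      refine ENNReal.rpow_le_rpow ?_ (le_of_lt hq0)
      have := hpt θ
      simp only [Pi.add_apply]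
      rw [← ENNReal.coe_add, ENNReal.coe_le_coe, ← NNReal.coe_le_coe]
      push_cast
      exact this
    exact h1.trans (ENNReal.lintegral_Lp_add_le hφ hψ hq)
  -- T is invariant under θ ↦ -θ
  have hTneg : T (fun θ => u (-θ)) = T u := by
    rw [hT]
    simp only
    rw [lint_eq _ huneg hq, lint_eq _ hucont hq]
    congr 2
    have hper : Function.Periodic (fun θ => ‖u θ‖ ^ q) (2*Real.pi) := by
      intro θ
      have : u (θ + 2*Real.pi) = u θ := by
        simp only [hu, circlePt, slicePt]
        rw [show θ + 2*Real.pi = θ + 2*Real.pi from rfl, Real.cos_add_two_pi, Real.sin_add_two_pi]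
      simp only [this]
    have h1 : (∫ θ in (0:ℝ)..(2*Real.pi), ‖u (-θ)‖ ^ q)
        = ∫ θ in (-(2*Real.pi))..(-(0:ℝ)), ‖u θ‖ ^ q :=
      intervalIntegral.integral_comp_neg (a := 0) (b := 2*Real.pi) (fun θ => ‖u θ‖ ^ q)
    rw [h1]
    have h2 := hper.intervalIntegral_add_eq (-(2*Real.pi)) 0
    simp only [neg_add_cancel, zero_add] at h2
    rw [neg_zero]
    exact h2
  -- identify sliceMp with T
  have hident : ∀ (K : ℍ[ℝ]) (hK : K ∈ QSphere),
      sliceMp f K q r = ENNReal.ofReal ((1/(2*Real.pi)) ^ (1/q)) * T (fun θ => f (circlePt K r θ)) := by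
    intro K hK
    have hKcont : Continuous fun θ => f (circlePt K r θ) := cont_circle f hf hK hr
    have hR : (0:ℝ) ≤ ∫ θ in (0:ℝ)..(2*Real.pi), ‖f (circlePt K r θ)‖ ^ q := by
      refine intervalIntegral.integral_nonneg (by positivity) fun θ _ => ?_
      exact Real.rpow_nonneg (norm_nonneg _) q
    have hc : (0:ℝ) ≤ 1/(2*Real.pi) := by positivity
    have hTK : T (fun θ => f (circlePt K r θ))
        = ENNReal.ofReal ((∫ θ in (0:ℝ)..(2*Real.pi), ‖f (circlePt K r θ)‖ ^ q) ^ (1/q)) := by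
      rw [hT]
      simp only
      rw [lint_eq _ hKcont hq, ← ENNReal.ofReal_rpow_of_nonneg hR (by positivity)]
    rw [hTK, sliceMp, Real.mul_rpow hc hR, ENNReal.ofReal_mul (by positivity)]
  rw [hident I hI, hident J hJ]
  calc ENNReal.ofReal ((1/(2*Real.pi)) ^ (1/q)) * T v
      ≤ ENNReal.ofReal ((1/(2*Real.pi)) ^ (1/q)) * (T u + T (fun θ => u (-θ))) := by
        exact mul_le_mul_right hmink _
    _ = 2 * (ENNReal.ofReal ((1/(2*Real.pi)) ^ (1/q)) * T u) := by
        rw [hTneg]; ring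

/-- If `f` is slice regular, `1 ≤ p ≤ ∞`, and the slice norm `‖f_J‖_p` is finite for some
imaginary unit `J`, then `‖f_J‖_p ≤ ‖f‖_p ≤ 2 ‖f_J‖_p`. -/
theorem slice_norm_comparison (f : ℍ[ℝ] → ℍ[ℝ]) (hf : SliceRegular f)
    (p : ℝ≥0∞) (hp : 1 ≤ p)
    (J : ℍ[ℝ]) (hJ : J ∈ QSphere) (hfin : sliceNormE f J p < ⊤) :
    sliceNormE f J p ≤ hardyNorm f p ∧ hardyNorm f p ≤ 2 * sliceNormE f J p := by
  constructor
  · exact le_biSup (fun I => sliceNormE f I p) hJ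
  · show (⨆ I ∈ QSphere, sliceNormE f I p) ≤ 2 * sliceNormE f J p
    refine iSup₂_le fun I hI => ?_
    by_cases hptop : p = ⊤
    · subst hptop
      simp only [sliceNormE, if_pos rfl]
      set S := ⨆ (w' : ℝ × ℝ) (_ : w'.1 ^ 2 + w'.2 ^ 2 < 1),
          ENNReal.ofReal ‖f (slicePt J w'.1 w'.2)‖ with hS
      refine iSup₂_le fun w hw => ?_
      have hb := pointwise_bound f hf hI hJ (x := w.1) (y := w.2) hw
      have hw' : ((w.1, -w.2) : ℝ × ℝ).1 ^ 2 + ((w.1, -w.2) : ℝ × ℝ).2 ^ 2 < 1 := by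
        simpa using hw
      have h1 : ENNReal.ofReal ‖f (slicePt J w.1 w.2)‖ ≤ S := by
        rw [hS]
        exact le_iSup₂ (f := fun (w' : ℝ × ℝ) (_ : w'.1 ^ 2 + w'.2 ^ 2 < 1) =>
          ENNReal.ofReal ‖f (slicePt J w'.1 w'.2)‖) w hw
      have h2 : ENNReal.ofReal ‖f (slicePt J w.1 (-w.2))‖ ≤ S := by
        rw [hS]
        exact le_iSup₂ (f := fun (w' : ℝ × ℝ) (_ : w'.1 ^ 2 + w'.2 ^ 2 < 1) =>
          ENNReal.ofReal ‖f (slicePt J w'.1 w'.2)‖) (w.1, -w.2) hw'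
      calc ENNReal.ofReal ‖f (slicePt I w.1 w.2)‖
          ≤ ENNReal.ofReal (‖f (slicePt J w.1 w.2)‖ + ‖f (slicePt J w.1 (-w.2))‖) :=
            ENNReal.ofReal_le_ofReal hb
        _ ≤ ENNReal.ofReal ‖f (slicePt J w.1 w.2)‖
            + ENNReal.ofReal ‖f (slicePt J w.1 (-w.2))‖ := ENNReal.ofReal_add_le
        _ ≤ S + S := add_le_add h1 h2
        _ = 2 * S := (two_mul _).symm
    · have hq : 1 ≤ p.toReal := by
        simpa using ENNReal.toReal_mono hptop hp
      simp only [sliceNormE, if_neg hptop, sliceNorm]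
      refine iSup₂_le fun r hr => ?_
      calc sliceMp f I p.toReal r ≤ 2 * sliceMp f J p.toReal r :=
            sliceMp_le f hf hI hJ hq hr
        _ ≤ 2 * ⨆ r' ∈ Set.Ico (0:ℝ) 1, sliceMp f J p.toReal r' :=
            mul_le_mul_right (le_biSup (fun r' => sliceMp f J p.toReal r') hr) 2
end
end

section
/- Let f ∈ H^p(𝔹) for some 0 < p ≤ ∞. Then its regular conjugate f^c also belongs to H^p(𝔹), with ‖f^c_I‖_p^p ≤ ‖F‖_p^p + ‖G‖_p^p when 0 < p < 2, and ‖f^c_I‖_p^p ≤ 2^{p/2-1}(‖F‖_p^p + ‖G‖_p^p) when 2 ≤ p < ∞, where f_I = F + GJ is the splitting on the slice L_I. -/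
open MeasureTheory Metric Filter Set
open scoped Topology ENNReal Quaternion

noncomputable section

/-- The embedding of `ℂ` onto the slice `L_I`. -/
def sliceEmbed (I : ℍ[ℝ]) (z : ℂ) : ℍ[ℝ] := slicePt I z.re z.im

/-- The integral mean of a complex function on the circle of radius `r`. -/
def cMp (F : ℂ → ℂ) (p r : ℝ) : ℝ≥0∞ :=
  ENNReal.ofReal
    (((1 / (2 * Real.pi)) * ∫ θ in (0:ℝ)..(2 * Real.pi),
      ‖F (r * Complex.exp (θ * Complex.I))‖ ^ p) ^ (1 / p))

/-- The classical Hardy norm of a complex function on the unit disc, `0 < p ≤ ∞`. -/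
def cHardyNorm (F : ℂ → ℂ) (p : ℝ≥0∞) : ℝ≥0∞ :=
  if p = ⊤ then ⨆ z ∈ Metric.ball (0:ℂ) 1, ENNReal.ofReal ‖F z‖
  else ⨆ r ∈ Set.Ico (0:ℝ) 1, cMp F p.toReal r

/-- Membership in the classical complex Hardy space `H^p` of the unit disc. -/
def MemCHp (F : ℂ → ℂ) (p : ℝ≥0∞) : Prop :=
  DifferentiableOn ℂ F (Metric.ball 0 1) ∧ cHardyNorm F p < ⊤

open scoped ComplexConjugate

namespace QAux

open MeasureTheory Metric Filter Set
open scoped Topology ENNReal Quaternion ComplexConjugate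

variable {I J K : ℍ[ℝ]} {f : ℍ[ℝ] → ℍ[ℝ]}

/-! ### Algebraic facts about imaginary units and slices -/

lemma sphere_comp (hI : I ∈ QSphere) :
    I.re = 0 ∧ I.imI^2 + I.imJ^2 + I.imK^2 = 1 := by
  have h : I * I = -1 := by rw [← sq]; exact hI
  have h1 : I.re*I.re - I.imI*I.imI - I.imJ*I.imJ - I.imK*I.imK = -1 := by
    rw [← Quaternion.re_mul, h]; simp
  have h2 : I.re*I.imI + I.imI*I.re + I.imJ*I.imK - I.imK*I.imJ = 0 := by
    rw [← Quaternion.imI_mul, h]; simp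
  have h3 : I.re*I.imJ - I.imI*I.imK + I.imJ*I.re + I.imK*I.imI = 0 := by
    rw [← Quaternion.imJ_mul, h]; simp
  have h4 : I.re*I.imK + I.imI*I.imJ - I.imJ*I.imI + I.imK*I.re = 0 := by
    rw [← Quaternion.imK_mul, h]; simp
  have hre : I.re = 0 := by
    by_contra hre
    have hi : I.imI = 0 := by
      have h5 : I.re * I.imI = 0 := by nlinarith [h2]
      rcases mul_eq_zero.mp h5 with h | h
      · exact absurd h hre
      · exact h
    have hj : I.imJ = 0 := by
      have h5 : I.re * I.imJ = 0 := by nlinarith [h3]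
      rcases mul_eq_zero.mp h5 with h | h
      · exact absurd h hre
      · exact h
    have hk : I.imK = 0 := by
      have h5 : I.re * I.imK = 0 := by nlinarith [h4]
      rcases mul_eq_zero.mp h5 with h | h
      · exact absurd h hre
      · exact h
    nlinarith [h1, sq_nonneg I.re]
  exact ⟨hre, by nlinarith [h1]⟩

lemma re_zero (hI : I ∈ QSphere) : I.re = 0 := (sphere_comp hI).1

lemma star_eq_neg (hI : I ∈ QSphere) : star I = -I := by
  ext <;> simp [re_zero hI]

lemma mul_self_eq (hI : I ∈ QSphere) : I * I = -1 := by rw [← sq]; exact hI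

lemma normSq_eq_one (hI : I ∈ QSphere) : Quaternion.normSq I = 1 := by
  obtain ⟨h0, h1⟩ := sphere_comp hI
  rw [Quaternion.normSq_def']
  nlinarith

lemma norm_eq_one (hI : I ∈ QSphere) : ‖I‖ = 1 := by
  have h := Quaternion.normSq_eq_norm_mul_self I
  rw [normSq_eq_one hI] at h
  nlinarith [norm_nonneg I]

lemma sliceEmbed_real (I : ℍ[ℝ]) (x : ℝ) : sliceEmbed I (x : ℂ) = (x : ℍ[ℝ]) := by
  simp [sliceEmbed, slicePt]

lemma sliceEmbed_one (I : ℍ[ℝ]) : sliceEmbed I 1 = 1 := by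
  simpa using sliceEmbed_real I 1

lemma sliceEmbed_add (I : ℍ[ℝ]) (z w : ℂ) :
    sliceEmbed I (z + w) = sliceEmbed I z + sliceEmbed I w := by
  simp only [sliceEmbed, slicePt, Complex.add_re, Complex.add_im, add_smul]
  push_cast
  abel

lemma sliceEmbed_neg (I : ℍ[ℝ]) (z : ℂ) : sliceEmbed I (-z) = -sliceEmbed I z := by
  simp only [sliceEmbed, slicePt, Complex.neg_re, Complex.neg_im, neg_smul]
  push_cast
  abel

lemma sliceEmbed_smul (I : ℍ[ℝ]) (r : ℝ) (z : ℂ) :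
    sliceEmbed I (r • z) = r • sliceEmbed I z := by
  simp only [sliceEmbed, slicePt, Complex.smul_re, Complex.smul_im]
  rw [smul_add, smul_smul]
  congr 1
  ext <;> simp [mul_comm]

lemma sliceEmbed_mul (hI : I ∈ QSphere) (z w : ℂ) :
    sliceEmbed I (z * w) = sliceEmbed I z * sliceEmbed I w := by
  obtain ⟨h0, h1⟩ := sphere_comp hI
  simp only [sliceEmbed, slicePt]
  ext <;>
    simp [Quaternion.re_mul, Quaternion.imI_mul, Quaternion.imJ_mul, Quaternion.imK_mul,
      Complex.mul_re, Complex.mul_im, h0] <;>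
    first
      | linear_combination (z.im * w.im) * h1
      | ring

lemma sliceEmbed_star (hI : I ∈ QSphere) (z : ℂ) :
    star (sliceEmbed I z) = sliceEmbed I (conj z) := by
  simp only [sliceEmbed, slicePt, Complex.conj_re, Complex.conj_im]
  ext <;> simp [re_zero hI]

lemma sliceEmbed_comm (hI : I ∈ QSphere) (z w : ℂ) :
    sliceEmbed I z * sliceEmbed I w = sliceEmbed I w * sliceEmbed I z := by
  rw [← sliceEmbed_mul hI, ← sliceEmbed_mul hI, mul_comm]

lemma norm_sliceEmbed (hI : I ∈ QSphere) (z : ℂ) : ‖sliceEmbed I z‖ = norm z := by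
  have h : sliceEmbed I z * star (sliceEmbed I z) = ((Complex.normSq z : ℝ) : ℍ[ℝ]) := by
    rw [sliceEmbed_star hI, ← sliceEmbed_mul hI, Complex.mul_conj]
    exact sliceEmbed_real I _
  have h2 : Quaternion.normSq (sliceEmbed I z) = Complex.normSq z := by
    have := Quaternion.self_mul_star (sliceEmbed I z)
    rw [h] at this
    exact (Quaternion.coe_injective this.symm)
  have h3 := Quaternion.normSq_eq_norm_mul_self (sliceEmbed I z)
  rw [h2] at h3
  have h4 : norm z * norm z = Complex.normSq z := by
    rw [← Complex.sq_norm]; ring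
  nlinarith [norm_nonneg (sliceEmbed I z), norm_nonneg z]

lemma J_comm (hI : I ∈ QSphere) (hIJ : I * J = -(J * I)) (z : ℂ) :
    J * sliceEmbed I z = sliceEmbed I (conj z) * J := by
  simp only [sliceEmbed, slicePt, Complex.conj_re, Complex.conj_im]
  rw [mul_add, add_mul, ← Quaternion.coe_commutes]
  congr 1
  rw [mul_smul_comm, smul_mul_assoc, neg_smul]
  rw [show J * I = -(I*J) by rw [hIJ, neg_neg]]
  rw [smul_neg]

lemma norm_split (hI : I ∈ QSphere) (hJ : J ∈ QSphere) (hIJ : I * J = -(J * I)) (a b : ℂ) :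
    ‖sliceEmbed I a + sliceEmbed I b * J‖^2 = norm a ^ 2 + norm b ^ 2 := by
  set x := sliceEmbed I a with hx
  set y := sliceEmbed I b with hy
  have hstar : star (x + y * J) = star x - J * star y := by
    rw [star_add, star_mul, star_eq_neg hJ, neg_mul, ← sub_eq_add_neg]
  have hJsy : J * star y = y * J := by
    rw [hy, sliceEmbed_star hI, J_comm hI hIJ, Complex.conj_conj]
  have hJsx : J * star x = x * J := by
    rw [hx, sliceEmbed_star hI, J_comm hI hIJ, Complex.conj_conj]
  have hxy : x * y = y * x := sliceEmbed_comm hI a b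
  have hmain : (x + y * J) * star (x + y * J) = x * star x + y * star y := by
    have e4 : (y * J) * (J * star y) = -(y * star y) := by
      rw [mul_assoc, ← mul_assoc J J, mul_self_eq hJ, neg_one_mul, mul_neg]
    have e5 : x * (J * star y) = (x * y) * J := by rw [hJsy, ← mul_assoc]
    have e6 : (y * J) * star x = (y * x) * J := by rw [mul_assoc, hJsx, ← mul_assoc]
    calc (x + y * J) * star (x + y * J)
        = x * star x - x * (J * star y) + ((y * J) * star x - (y * J) * (J * star y)) := by
          rw [hstar]; noncomm_ring
      _ = x * star x + y * star y := by rw [e4, e5, e6, hxy]; noncomm_ring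
  have hxx : x * star x = ((Complex.normSq a : ℝ) : ℍ[ℝ]) := by
    rw [hx, sliceEmbed_star hI, ← sliceEmbed_mul hI, Complex.mul_conj]
    exact sliceEmbed_real I _
  have hyy : y * star y = ((Complex.normSq b : ℝ) : ℍ[ℝ]) := by
    rw [hy, sliceEmbed_star hI, ← sliceEmbed_mul hI, Complex.mul_conj]
    exact sliceEmbed_real I _
  have h2 : Quaternion.normSq (x + y * J) = Complex.normSq a + Complex.normSq b := by
    have := Quaternion.self_mul_star (x + y * J)
    rw [hmain, hxx, hyy, ← Quaternion.coe_add] at this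
    exact (Quaternion.coe_injective this.symm)
  have h3 := Quaternion.normSq_eq_norm_mul_self (x + y * J)
  rw [h2] at h3
  rw [Complex.sq_norm, Complex.sq_norm]
  nlinarith [h3]

lemma norm_split_sub (hI : I ∈ QSphere) (hJ : J ∈ QSphere) (hIJ : I * J = -(J * I)) (a b : ℂ) :
    ‖sliceEmbed I a - sliceEmbed I b * J‖^2 = norm a ^ 2 + norm b ^ 2 := by
  have h := norm_split hI hJ hIJ a (-b)
  rw [sliceEmbed_neg, neg_mul, ← sub_eq_add_neg] at h
  rw [norm_neg] at h
  exact h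

end QAux

namespace QAux

open MeasureTheory Metric Filter Set
open scoped Topology ENNReal Quaternion ComplexConjugate

variable {I J K : ℍ[ℝ]} {f : ℍ[ℝ] → ℍ[ℝ]}

/-! ### Holomorphy on slices and the representation formula -/

lemma mem_ball_iff_sq {z : ℂ} : z ∈ ball (0:ℂ) 1 ↔ z.re^2 + z.im^2 < 1 := by
  rw [mem_ball_zero_iff]
  have h2 : ‖z‖^2 = z.re^2 + z.im^2 := by
    rw [Complex.sq_norm, Complex.normSq_apply]; ring
  constructor <;> intro h <;> nlinarith [norm_nonneg z]

lemma conj_mem_ball {z : ℂ} (hz : z ∈ ball (0:ℂ) 1) : (conj z) ∈ ball (0:ℂ) 1 := by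
  rw [mem_ball_zero_iff] at hz ⊢
  simpa using hz

/-- The ring hom `ℂ →+* ℍ` onto the slice `L_K`. -/
def sliceRingHom (K : ℍ[ℝ]) (hK : K ∈ QSphere) : ℂ →+* ℍ[ℝ] where
  toFun := sliceEmbed K
  map_one' := sliceEmbed_one K
  map_mul' := sliceEmbed_mul hK
  map_zero' := by simpa using sliceEmbed_real K 0
  map_add' := sliceEmbed_add K

/-- CR property of the slice restriction, packaged via `HasFDerivAt`. -/
def SliceCR (K : ℍ[ℝ]) (g : ℂ → ℍ[ℝ]) : Prop :=
  ∀ z ∈ ball (0:ℂ) 1, ∃ L : ℂ →L[ℝ] ℍ[ℝ],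
    HasFDerivAt g L z ∧ L Complex.I = K * L 1

lemma sliceCR_of_sliceRegular (hreg : SliceRegular f) (hK : K ∈ QSphere) :
    SliceCR K (fun w : ℂ => f (sliceEmbed K w)) := by
  intro z hz
  obtain ⟨hdiff, hcr⟩ := hreg K hK (z.re, z.im) (mem_ball_iff_sq.mp hz)
  set u := fun w : ℝ × ℝ => f (slicePt K w.1 w.2) with hu
  set D := fderiv ℝ u (z.re, z.im) with hD
  have he : HasFDerivAt (fun w : ℂ => (w.re, w.im))
      (Complex.equivRealProdCLM : ℂ →L[ℝ] ℝ × ℝ) z :=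
    (Complex.equivRealProdCLM : ℂ →L[ℝ] ℝ × ℝ).hasFDerivAt
  have hcomp : HasFDerivAt (fun w : ℂ => f (sliceEmbed K w))
      (D.comp (Complex.equivRealProdCLM : ℂ →L[ℝ] ℝ × ℝ)) z := by
    have := HasFDerivAt.comp z (hdiff.hasFDerivAt) he
    exact this
  refine ⟨_, hcomp, ?_⟩
  have h1 : (D.comp (Complex.equivRealProdCLM : ℂ →L[ℝ] ℝ × ℝ)) 1 = D (1, 0) := by
    simp [ContinuousLinearMap.comp_apply]
  have hI' : (D.comp (Complex.equivRealProdCLM : ℂ →L[ℝ] ℝ × ℝ)) Complex.I = D (0, 1) := by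
    simp [ContinuousLinearMap.comp_apply]
  rw [h1, hI']
  have h2 : K * (D (1,0) + K * D (0,1)) = K * 0 := by rw [hcr]
  rw [mul_add, ← mul_assoc, mul_self_eq hK] at h2
  have h3 : K * D (1, 0) - D (0, 1) = 0 := by
    rw [mul_zero] at h2
    linear_combination (norm := noncomm_ring) h2
  linear_combination (norm := noncomm_ring) -h3

/-- The identity principle for slice-CR functions agreeing on the real axis. -/
lemma slice_identity (hK : K ∈ QSphere) {g h : ℂ → ℍ[ℝ]}
    (hg : SliceCR K g) (hh : SliceCR K h)
    (hagree : ∀ x : ℝ, |x| < 1 → g (x : ℂ) = h (x : ℂ)) :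
    EqOn g h (ball (0:ℂ) 1) := by
  letI : Module ℂ ℍ[ℝ] := Module.compHom ℍ[ℝ] (sliceRingHom K hK)
  have hsmul : ∀ (z : ℂ) (q : ℍ[ℝ]), z • q = sliceEmbed K z * q := fun _ _ => rfl
  letI : NormedSpace ℂ ℍ[ℝ] := by
    refine ⟨fun z q => ?_⟩
    rw [hsmul, norm_mul, norm_sliceEmbed hK]
  letI : IsScalarTower ℝ ℂ ℍ[ℝ] := ⟨fun r z q => by
    rw [hsmul, hsmul, sliceEmbed_smul, smul_mul_assoc]⟩
  have hdiff : ∀ {u : ℂ → ℍ[ℝ]}, SliceCR K u → DifferentiableOn ℂ u (ball (0:ℂ) 1) := by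
    intro u hu z hz
    obtain ⟨L, hL, hCR⟩ := hu z hz
    let L' : ℂ →L[ℂ] ℍ[ℝ] := LinearMap.toContinuousLinearMap
      { toFun := fun w => w • (L 1)
        map_add' := fun a b => add_smul a b _
        map_smul' := fun c w => mul_smul c w (L 1) }
    have hrestrict : L'.restrictScalars ℝ = L := by
      apply ContinuousLinearMap.ext
      intro w
      have hw : w = (w.re : ℂ) + w.im • Complex.I := by
        simpa [Complex.real_smul] using (Complex.re_add_im w).symm
      have hwre : (w.re : ℂ) = w.re • (1 : ℂ) := by simp
      have hLw : L w = w.re • L 1 + w.im • L Complex.I := by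
        conv_lhs => rw [hw, hwre]
        rw [L.map_add, L.map_smul, L.map_smul]
      show w • L 1 = L w
      rw [hLw, hCR, hsmul]
      show (sliceEmbed K w) * L 1 = _
      rw [show sliceEmbed K w = (w.re : ℍ[ℝ]) + w.im • K from rfl]
      rw [add_mul, Quaternion.coe_mul_eq_smul, smul_mul_assoc]
    exact (hasFDerivAt_of_restrictScalars ℝ hL hrestrict).differentiableAt.differentiableWithinAt
  have hga : AnalyticOnNhd ℂ g (ball (0:ℂ) 1) := (hdiff hg).analyticOnNhd isOpen_ball
  have hha : AnalyticOnNhd ℂ h (ball (0:ℂ) 1) := (hdiff hh).analyticOnNhd isOpen_ball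
  have hseq : Tendsto (fun n : ℕ => (((1:ℝ)/(n+2) : ℝ) : ℂ)) atTop (𝓝[≠] (0:ℂ)) := by
    rw [tendsto_nhdsWithin_iff]
    constructor
    · have h1 : Tendsto (fun n : ℕ => (1:ℝ)/(n+2)) atTop (𝓝 0) := by
        have h0 := (tendsto_one_div_add_atTop_nhds_zero_nat (𝕜 := ℝ)).comp (tendsto_add_atTop_nat 1)
        have heq : (fun n : ℕ => (1:ℝ)/(n+2))
            = (fun n : ℕ => (1:ℝ)/(n+1)) ∘ (fun n => n + 1) := by
          funext n; simp [Function.comp]; push_cast; ring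
        rw [heq]; exact h0
      have h2 := (Complex.continuous_ofReal.tendsto 0).comp h1
      rw [Complex.ofReal_zero] at h2
      exact h2
    · filter_upwards with n
      simp only [mem_compl_iff, mem_singleton_iff, Ne]
      intro hcontra
      have h5 : (1:ℝ)/(n+2) = 0 := by exact_mod_cast congrArg Complex.re hcontra
      have hpos : (0:ℝ) < 1/(n+2) := by positivity
      linarith
  have hfreq : ∃ᶠ z in 𝓝[≠] (0:ℂ), g z = h z := by
    apply hseq.frequently
    apply Frequently.of_forall
    intro n
    apply hagree
    rw [abs_of_pos (by positivity)]
    have h2 : (2:ℝ) ≤ (n:ℝ) + 2 := by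
      have := Nat.cast_nonneg (α := ℝ) n; linarith
    calc (1:ℝ)/(n+2) ≤ 1/2 := one_div_le_one_div_of_le two_pos h2
      _ < 1 := by norm_num
  exact hga.eqOn_of_preconnected_of_frequently_eq hha
    (convex_ball (0:ℂ) 1).isPreconnected (mem_ball_self one_pos) hfreq

lemma rep_formula (hreg : SliceRegular f) (hI : I ∈ QSphere) (hK : K ∈ QSphere) :
    ∀ z ∈ ball (0:ℂ) 1, f (sliceEmbed K z)
      = ((1/2:ℝ) • (1 - K*I)) * f (sliceEmbed I z)
        + ((1/2:ℝ) • (1 + K*I)) * f (sliceEmbed I (conj z)) := by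
  set c₁ : ℍ[ℝ] := (1/2:ℝ) • (1 - K*I) with hc₁
  set c₂ : ℍ[ℝ] := (1/2:ℝ) • (1 + K*I) with hc₂
  have hKc₁ : K * c₁ = c₁ * I := by
    rw [hc₁, mul_smul_comm, smul_mul_assoc]
    congr 1
    rw [mul_sub, sub_mul, mul_one, one_mul, ← mul_assoc, mul_self_eq hK,
      mul_assoc, mul_self_eq hI]
    noncomm_ring
  have hKc₂ : K * c₂ = -(c₂ * I) := by
    rw [hc₂, mul_smul_comm, smul_mul_assoc, ← smul_neg]
    congr 1
    rw [mul_add, add_mul, mul_one, one_mul, ← mul_assoc, mul_self_eq hK,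
      mul_assoc, mul_self_eq hI]
    noncomm_ring
  have hsum : c₁ + c₂ = 1 := by
    rw [hc₁, hc₂, ← smul_add]
    have h2 : (1 - K*I) + (1 + K*I) = ((2:ℝ) : ℍ[ℝ]) := by
      rw [show ((2:ℝ):ℍ[ℝ]) = 2 by norm_cast, sub_add_add_cancel, one_add_one_eq_two]
    rw [h2, ← Quaternion.coe_smul]
    norm_num
  have hCRh : SliceCR K (fun z : ℂ =>
      c₁ * f (sliceEmbed I z) + c₂ * f (sliceEmbed I (conj z))) := by
    intro z hz
    obtain ⟨L₁, hL₁, hCR₁⟩ := sliceCR_of_sliceRegular hreg hI z hz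
    obtain ⟨L₂, hL₂, hCR₂⟩ := sliceCR_of_sliceRegular hreg hI (conj z) (conj_mem_ball hz)
    have hconj : HasFDerivAt (fun w : ℂ => (conj w : ℂ))
        (Complex.conjCLE : ℂ ≃L[ℝ] ℂ).toContinuousLinearMap z := by
      exact
        (Complex.conjCLE : ℂ ≃L[ℝ] ℂ).toContinuousLinearMap.hasFDerivAt (x := z)
    have hcomp : HasFDerivAt (fun w : ℂ => f (sliceEmbed I (conj w)))
        (L₂.comp (Complex.conjCLE : ℂ ≃L[ℝ] ℂ).toContinuousLinearMap) z :=
      HasFDerivAt.comp z hL₂ hconj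
    have hder : HasFDerivAt (fun w : ℂ =>
        c₁ * f (sliceEmbed I w) + c₂ * f (sliceEmbed I (conj w)))
        (c₁ • L₁ + c₂ • (L₂.comp (Complex.conjCLE : ℂ ≃L[ℝ] ℂ).toContinuousLinearMap)) z :=
      (hL₁.const_mul c₁).add (hcomp.const_mul c₂)
    refine ⟨_, hder, ?_⟩
    have happ : ∀ w : ℂ,
        (c₁ • L₁ + c₂ • (L₂.comp (Complex.conjCLE : ℂ ≃L[ℝ] ℂ).toContinuousLinearMap)) w
        = c₁ * L₁ w + c₂ * L₂ (conj w) := by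
      intro w
      simp [ContinuousLinearMap.add_apply, ContinuousLinearMap.smul_apply,
        ContinuousLinearMap.comp_apply, Complex.conjCLE_apply, smul_eq_mul]
    rw [happ, happ]
    rw [Complex.conj_I, map_neg, show (starRingEnd ℂ) (1:ℂ) = 1 from map_one _,
      hCR₁, hCR₂]
    have expand : K * (c₁ * L₁ 1 + c₂ * L₂ 1) = (K*c₁) * L₁ 1 + (K*c₂) * L₂ 1 := by
      noncomm_ring
    rw [expand, hKc₁, hKc₂]
    noncomm_ring
  intro z hz
  refine slice_identity hK (sliceCR_of_sliceRegular hreg hK) hCRh ?_ hz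
  intro x hx
  rw [sliceEmbed_real, sliceEmbed_real, Complex.conj_ofReal, sliceEmbed_real,
    ← add_mul, hsum, one_mul]

lemma rep_bound (hreg : SliceRegular f) (hI : I ∈ QSphere) (hK : K ∈ QSphere)
    {z : ℂ} (hz : z ∈ ball (0:ℂ) 1) :
    ‖f (sliceEmbed K z)‖ ≤ ‖f (sliceEmbed I z)‖ + ‖f (sliceEmbed I (conj z))‖ := by
  rw [rep_formula hreg hI hK z hz]
  have hbd : ∀ s : ℍ[ℝ], ‖s‖ ≤ 2 → ∀ q : ℍ[ℝ], ‖((1/2:ℝ) • s) * q‖ ≤ ‖q‖ := by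
    intro s hs q
    rw [norm_mul, norm_smul, Real.norm_eq_abs, abs_of_pos (by norm_num : (0:ℝ) < 1/2)]
    nlinarith [norm_nonneg q, norm_nonneg s]
  have h1 : ‖(1:ℍ[ℝ]) - K*I‖ ≤ 2 := by
    calc ‖(1:ℍ[ℝ]) - K*I‖ ≤ ‖(1:ℍ[ℝ])‖ + ‖K*I‖ := norm_sub_le _ _
      _ = 2 := by rw [norm_one, norm_mul, norm_eq_one hK, norm_eq_one hI]; norm_num
  have h2 : ‖(1:ℍ[ℝ]) + K*I‖ ≤ 2 := by
    calc ‖(1:ℍ[ℝ]) + K*I‖ ≤ ‖(1:ℍ[ℝ])‖ + ‖K*I‖ := norm_add_le _ _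
      _ = 2 := by rw [norm_one, norm_mul, norm_eq_one hK, norm_eq_one hI]; norm_num
  calc ‖((1/2:ℝ) • (1 - K*I)) * f (sliceEmbed I z)
        + ((1/2:ℝ) • (1 + K*I)) * f (sliceEmbed I (conj z))‖
      ≤ ‖((1/2:ℝ) • (1 - K*I)) * f (sliceEmbed I z)‖
        + ‖((1/2:ℝ) • (1 + K*I)) * f (sliceEmbed I (conj z))‖ := norm_add_le _ _
    _ ≤ ‖f (sliceEmbed I z)‖ + ‖f (sliceEmbed I (conj z))‖ :=
        add_le_add (hbd _ h1 _) (hbd _ h2 _)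

end QAux

namespace QAux

open MeasureTheory Metric Filter Set intervalIntegral
open scoped Topology ENNReal Quaternion ComplexConjugate

variable {I J K : ℍ[ℝ]} {f : ℍ[ℝ] → ℍ[ℝ]}

/-! ### Elementary real power inequalities -/

lemma real_rpow_add_le_add_rpow {a b q : ℝ} (ha : 0 ≤ a) (hb : 0 ≤ b)
    (h0 : 0 ≤ q) (h1 : q ≤ 1) : (a+b)^q ≤ a^q + b^q := by
  have h := NNReal.coe_le_coe.2 (NNReal.rpow_add_le_add_rpow a.toNNReal b.toNNReal h0 h1)
  push_cast at h
  rwa [Real.coe_toNNReal a ha, Real.coe_toNNReal b hb] at h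

lemma real_rpow_add_le_mul {a b q : ℝ} (ha : 0 ≤ a) (hb : 0 ≤ b) (h1 : 1 ≤ q) :
    (a+b)^q ≤ 2^(q-1) * (a^q + b^q) := by
  have h := NNReal.coe_le_coe.2 (NNReal.rpow_add_le_mul_rpow_add_rpow a.toNNReal b.toNNReal h1)
  push_cast at h
  rwa [Real.coe_toNNReal a ha, Real.coe_toNNReal b hb] at h

lemma sq_sum_rpow_small {a b q : ℝ} (ha : 0 ≤ a) (hb : 0 ≤ b) (h0 : 0 < q) (h2 : q ≤ 2) :
    (a^2 + b^2)^(q/2) ≤ a^q + b^q := by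
  have key := real_rpow_add_le_add_rpow (sq_nonneg a) (sq_nonneg b)
    (by positivity : (0:ℝ) ≤ q/2) (by linarith : q/2 ≤ 1)
  have e : ∀ c : ℝ, 0 ≤ c → (c^2 : ℝ)^(q/2) = c^q := by
    intro c hc
    rw [← Real.rpow_natCast c 2, ← Real.rpow_mul hc, show ((2:ℕ):ℝ)*(q/2) = q by push_cast; ring]
  rwa [e a ha, e b hb] at key

lemma sq_sum_rpow_big {a b q : ℝ} (ha : 0 ≤ a) (hb : 0 ≤ b) (h2 : 2 ≤ q) :
    (a^2 + b^2)^(q/2) ≤ 2^(q/2 - 1) * (a^q + b^q) := by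
  have key := real_rpow_add_le_mul (sq_nonneg a) (sq_nonneg b) (by linarith : 1 ≤ q/2)
  have e : ∀ c : ℝ, 0 ≤ c → (c^2 : ℝ)^(q/2) = c^q := by
    intro c hc
    rw [← Real.rpow_natCast c 2, ← Real.rpow_mul hc, show ((2:ℕ):ℝ)*(q/2) = q by push_cast; ring]
  rwa [e a ha, e b hb] at key

lemma two_rpow_bound {s t q : ℝ} (hs : 0 ≤ s) (ht : 0 ≤ t) (hq : 0 < q) :
    (s+t)^q ≤ 2^q * (s^q + t^q) := by
  rcases le_total s t with h | h
  · calc (s+t)^q ≤ (2*t)^q := Real.rpow_le_rpow (by linarith) (by linarith) hq.le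
      _ = 2^q * t^q := Real.mul_rpow (by norm_num) ht
      _ ≤ 2^q * (s^q + t^q) := by
          have h1 : (0:ℝ) ≤ s^q := Real.rpow_nonneg hs q
          nlinarith [Real.rpow_nonneg (show (0:ℝ) ≤ 2 by norm_num) q]
  · calc (s+t)^q ≤ (2*s)^q := Real.rpow_le_rpow (by linarith) (by linarith) hq.le
      _ = 2^q * s^q := Real.mul_rpow (by norm_num) hs
      _ ≤ 2^q * (s^q + t^q) := by
          have h1 : (0:ℝ) ≤ t^q := Real.rpow_nonneg ht q
          nlinarith [Real.rpow_nonneg (show (0:ℝ) ≤ 2 by norm_num) q]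

lemma le_add_of_sq_eq {x a b : ℝ} (hx : 0 ≤ x) (ha : 0 ≤ a) (hb : 0 ≤ b)
    (h : x^2 = a^2 + b^2) : x ≤ a + b := by nlinarith

lemma le_of_sq_le_sq {a x : ℝ} (ha : 0 ≤ a) (hx : 0 ≤ x) (h : a^2 ≤ x^2) : a ≤ x := by
  nlinarith

/-! ### Circle points -/

lemma circle_mem_ball {r : ℝ} (hr0 : 0 ≤ r) (hr1 : r < 1) (θ : ℝ) :
    ((r:ℂ) * Complex.exp (θ * Complex.I)) ∈ ball (0:ℂ) 1 := by
  rw [mem_ball_zero_iff, norm_mul,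
    Complex.norm_exp_ofReal_mul_I, Complex.norm_real, Real.norm_eq_abs, abs_of_nonneg hr0, mul_one]
  exact hr1

lemma circlePt_eq (K : ℍ[ℝ]) (r θ : ℝ) :
    circlePt K r θ = sliceEmbed K ((r:ℂ) * Complex.exp (θ * Complex.I)) := by
  simp [circlePt, sliceEmbed, slicePt, Complex.mul_re, Complex.mul_im,
    Complex.exp_ofReal_mul_I_re, Complex.exp_ofReal_mul_I_im]

lemma conj_circle (r θ : ℝ) :
    conj ((r:ℂ) * Complex.exp (θ * Complex.I))
      = (r:ℂ) * Complex.exp (((-θ : ℝ) : ℂ) * Complex.I) := by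
  rw [map_mul, Complex.conj_ofReal, ← Complex.exp_conj]
  congr 1
  simp only [map_mul, Complex.conj_ofReal, Complex.conj_I]
  push_cast
  ring

lemma periodic_circle (g : ℂ → ℝ) (r : ℝ) :
    Function.Periodic (fun θ : ℝ => g ((r:ℂ) * Complex.exp ((θ:ℂ) * Complex.I))) (2*Real.pi) := by
  intro θ
  simp only
  congr 2
  push_cast
  rw [add_mul, Complex.exp_add, Complex.exp_two_pi_mul_I, mul_one]

lemma integral_reflect (g : ℂ → ℝ) (r : ℝ) :
    (∫ θ in (0:ℝ)..(2*Real.pi), g ((r:ℂ) * Complex.exp (((-θ : ℝ) : ℂ) * Complex.I)))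
      = ∫ θ in (0:ℝ)..(2*Real.pi), g ((r:ℂ) * Complex.exp ((θ:ℂ) * Complex.I)) := by
  have h1 : (∫ θ in (0:ℝ)..(2*Real.pi), g ((r:ℂ) * Complex.exp (((-θ : ℝ) : ℂ) * Complex.I)))
      = ∫ θ in (-(2*Real.pi))..(0:ℝ), g ((r:ℂ) * Complex.exp ((θ:ℂ) * Complex.I)) := by
    have := intervalIntegral.integral_comp_neg
      (a := (0:ℝ)) (b := 2*Real.pi)
      (f := fun θ : ℝ => g ((r:ℂ) * Complex.exp ((θ:ℂ) * Complex.I)))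
    simpa using this
  rw [h1]
  have h2 := (periodic_circle g r).intervalIntegral_add_eq (-(2*Real.pi)) 0
  simpa using h2

/-! ### ℝ≥0∞ power manipulation -/

lemma ofReal_rpow_pow {c : ℝ} (hc : 0 ≤ c) {q : ℝ} (hq : 0 < q) :
    ENNReal.ofReal (c ^ (1/q)) ^ q = ENNReal.ofReal c := by
  rw [ENNReal.ofReal_rpow_of_nonneg (Real.rpow_nonneg hc _) hq.le,
    ← Real.rpow_mul hc, one_div, inv_mul_cancel₀ hq.ne', Real.rpow_one]

lemma rpow_inv_le {x C : ℝ≥0∞} {q : ℝ} (hq : 0 < q) (h : x ^ q ≤ C) : x ≤ C ^ (1/q) := by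
  have h2 := ENNReal.rpow_le_rpow h (by positivity : (0:ℝ) ≤ 1/q)
  rwa [← ENNReal.rpow_mul, mul_one_div, div_self hq.ne', ENNReal.rpow_one] at h2

lemma biSup_rpow_le {M : ℝ → ℝ≥0∞} {S : Set ℝ} {C : ℝ≥0∞} {q : ℝ} (hq : 0 < q)
    (h : ∀ r ∈ S, M r ^ q ≤ C) : (⨆ r ∈ S, M r) ^ q ≤ C := by
  have h2 : (⨆ r ∈ S, M r) ≤ C ^ (1/q) := iSup₂_le fun r hr => rpow_inv_le hq (h r hr)
  calc (⨆ r ∈ S, M r) ^ q ≤ (C ^ (1/q)) ^ q := ENNReal.rpow_le_rpow h2 hq.le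
    _ = C := by rw [← ENNReal.rpow_mul, one_div, inv_mul_cancel₀ hq.ne', ENNReal.rpow_one]

/-! ### Continuity on circles -/

lemma circle_cont (hreg : SliceRegular f) (hK : K ∈ QSphere) {r : ℝ}
    (hr0 : 0 ≤ r) (hr1 : r < 1) :
    Continuous fun θ : ℝ => f (circlePt K r θ) := by
  rw [continuous_iff_continuousAt]
  intro θ
  have hmem : (r*Real.cos θ)^2 + (r*Real.sin θ)^2 < 1 := by
    have h := Real.sin_sq_add_cos_sq θ
    have heq : (r*Real.cos θ)^2 + (r*Real.sin θ)^2
        = r^2 * (Real.sin θ^2 + Real.cos θ^2) := by ring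
    rw [heq, h, mul_one]
    nlinarith
  have hd := (hreg K hK (r*Real.cos θ, r*Real.sin θ) hmem).1
  have hcont : ContinuousAt (fun w : ℝ×ℝ => f (slicePt K w.1 w.2))
      (r*Real.cos θ, r*Real.sin θ) := hd.continuousAt
  have hmap : Continuous fun θ : ℝ => (r*Real.cos θ, r*Real.sin θ) := by fun_prop
  exact ContinuousAt.comp (f := fun θ : ℝ => (r*Real.cos θ, r*Real.sin θ)) (x := θ)
    hcont hmap.continuousAt

lemma circle_cont_rpow (hreg : SliceRegular f) (hK : K ∈ QSphere) {r : ℝ}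
    (hr0 : 0 ≤ r) (hr1 : r < 1) {q : ℝ} (hq : 0 ≤ q) :
    Continuous fun θ : ℝ => ‖f (circlePt K r θ)‖ ^ q :=
  ((circle_cont hreg hK hr0 hr1).norm).rpow_const (fun _ => Or.inr hq)

lemma cont_absF {F : ℂ → ℂ} (hF : ContinuousOn F (ball 0 1)) {r : ℝ}
    (hr0 : 0 ≤ r) (hr1 : r < 1) {q : ℝ} (hq : 0 ≤ q) :
    Continuous fun θ : ℝ => norm (F ((r : ℂ) * Complex.exp ((θ:ℂ) * Complex.I))) ^ q := by
  rw [continuous_iff_continuousAt]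
  intro θ
  have hmem := circle_mem_ball hr0 hr1 θ
  have hmap : ContinuousAt (fun θ : ℝ => (r:ℂ) * Complex.exp ((θ:ℂ) * Complex.I)) θ := by
    fun_prop
  have hFat : ContinuousAt F ((r:ℂ) * Complex.exp ((θ:ℂ) * Complex.I)) :=
    hF.continuousAt (isOpen_ball.mem_nhds hmem)
  have h0 : ContinuousAt (fun θ : ℝ => F ((r:ℂ) * Complex.exp ((θ:ℂ) * Complex.I))) θ :=
    ContinuousAt.comp (f := fun θ : ℝ => (r:ℂ) * Complex.exp ((θ:ℂ) * Complex.I)) (x := θ)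
      hFat hmap
  have h1 : ContinuousAt
      (fun θ : ℝ => norm (F ((r:ℂ) * Complex.exp ((θ:ℂ) * Complex.I)))) θ :=
    ContinuousAt.comp (f := fun θ : ℝ => F ((r:ℂ) * Complex.exp ((θ:ℂ) * Complex.I))) (x := θ)
      continuous_norm.continuousAt h0
  exact h1.rpow_const (Or.inr hq)

/-! ### Integral mean manipulations -/

lemma sliceMp_pow {q r : ℝ} (hq : 0 < q) :
    sliceMp f K q r ^ q
      = ENNReal.ofReal ((1/(2*Real.pi)) * ∫ θ in (0:ℝ)..(2*Real.pi), ‖f (circlePt K r θ)‖^q) := by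
  have h2π : (0:ℝ) < 2*Real.pi := by nlinarith [Real.pi_pos]
  have hint : (0:ℝ) ≤ ∫ θ in (0:ℝ)..(2*Real.pi), ‖f (circlePt K r θ)‖^q := by
    apply intervalIntegral.integral_nonneg (by linarith)
    intro θ _
    positivity
  rw [sliceMp]
  exact ofReal_rpow_pow (mul_nonneg (one_div_pos.mpr h2π).le hint) hq

lemma cMp_pow {F : ℂ → ℂ} {q r : ℝ} (hq : 0 < q) :
    cMp F q r ^ q
      = ENNReal.ofReal ((1/(2*Real.pi)) *
          ∫ θ in (0:ℝ)..(2*Real.pi), norm (F (r * Complex.exp (θ * Complex.I)))^q) := by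
  have h2π : (0:ℝ) < 2*Real.pi := by nlinarith [Real.pi_pos]
  have hint : (0:ℝ) ≤ ∫ θ in (0:ℝ)..(2*Real.pi),
      norm (F (r * Complex.exp (θ * Complex.I)))^q := by
    apply intervalIntegral.integral_nonneg (by linarith)
    intro θ _
    positivity
  rw [cMp]
  exact ofReal_rpow_pow (mul_nonneg (one_div_pos.mpr h2π).le hint) hq

end QAux



namespace QAux

open MeasureTheory Metric Filter Set
open scoped Topology ENNReal Quaternion ComplexConjugate

variable {I J K : ℍ[ℝ]} {f : ℍ[ℝ] → ℍ[ℝ]}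

lemma sliceMp_pow_le {q r : ℝ} (hq : 0 < q)
    (hfC : Continuous fun θ : ℝ => ‖f (circlePt K r θ)‖^q)
    {g : ℝ → ℝ} (hg : Continuous g)
    (hpt : ∀ θ : ℝ, ‖f (circlePt K r θ)‖^q ≤ g θ) :
    sliceMp f K q r ^ q
      ≤ ENNReal.ofReal ((1/(2*Real.pi)) * ∫ θ in (0:ℝ)..(2*Real.pi), g θ) := by
  have h2π : (0:ℝ) < 2*Real.pi := by nlinarith [Real.pi_pos]
  rw [sliceMp_pow hq]
  apply ENNReal.ofReal_le_ofReal
  apply mul_le_mul_of_nonneg_left ?_ (one_div_pos.mpr h2π).le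
  exact intervalIntegral.integral_mono_on (by linarith)
    (hfC.intervalIntegrable _ _) (hg.intervalIntegrable _ _) (fun θ _ => hpt θ)

end QAux

/-- If `f ∈ H^p(𝔹)` splits on `L_I` as `f_I = F + GJ`, and `fc` is its regular conjugate
(the slice regular function with `fc_I(z) = conj(F(conj z)) − G(z)J`), then `fc ∈ H^p(𝔹)`,
with `‖fc_I‖_p^p ≤ ‖F‖_p^p + ‖G‖_p^p` for `0 < p < 2` and
`‖fc_I‖_p^p ≤ 2^{p/2-1}(‖F‖_p^p + ‖G‖_p^p)` for `2 ≤ p < ∞`. -/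
theorem regular_conjugate_memHp (f fc : ℍ[ℝ] → ℍ[ℝ]) (p : ℝ≥0∞) (hp : 0 < p)
    (hfH : MemHp f p)
    (I J : ℍ[ℝ]) (hI : I ∈ QSphere) (hJ : J ∈ QSphere) (hIJ : I * J = -(J * I))
    (F G : ℂ → ℂ)
    (hF : DifferentiableOn ℂ F (Metric.ball 0 1))
    (hG : DifferentiableOn ℂ G (Metric.ball 0 1))
    (hsplit : ∀ z ∈ Metric.ball (0:ℂ) 1,
      f (sliceEmbed I z) = sliceEmbed I (F z) + sliceEmbed I (G z) * J)
    (hfc : SliceRegular fc)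
    (hfcsplit : ∀ z ∈ Metric.ball (0:ℂ) 1,
      fc (sliceEmbed I z) = sliceEmbed I (conj (F (conj z))) - sliceEmbed I (G z) * J) :
    hardyNorm fc p < ⊤ ∧
    (p < ⊤ → p.toReal < 2 →
      sliceNorm fc I p.toReal ^ p.toReal
        ≤ cHardyNorm F p ^ p.toReal + cHardyNorm G p ^ p.toReal) ∧
    (p < ⊤ → 2 ≤ p.toReal →
      sliceNorm fc I p.toReal ^ p.toReal
        ≤ ENNReal.ofReal (2 ^ (p.toReal / 2 - 1))
            * (cHardyNorm F p ^ p.toReal + cHardyNorm G p ^ p.toReal)) := by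
  classical
  obtain ⟨hfreg, hfHn⟩ := hfH
  have hFc : ContinuousOn F (Metric.ball 0 1) := hF.continuousOn
  have hGc : ContinuousOn G (Metric.ball 0 1) := hG.continuousOn
  have h2π : (0:ℝ) < 2*Real.pi := by nlinarith [Real.pi_pos]
  have habs : ∀ z : ℂ, 0 ≤ norm z := fun z => norm_nonneg z
  -- pointwise norm identities on the slice L_I
  have hfnorm : ∀ z ∈ Metric.ball (0:ℂ) 1,
      ‖f (sliceEmbed I z)‖^2 = norm (F z)^2 + norm (G z)^2 := by
    intro z hz
    rw [hsplit z hz]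
    exact QAux.norm_split hI hJ hIJ _ _
  have hfcnorm : ∀ z ∈ Metric.ball (0:ℂ) 1,
      ‖fc (sliceEmbed I z)‖^2 = norm (F (conj z))^2 + norm (G z)^2 := by
    intro z hz
    rw [hfcsplit z hz, QAux.norm_split_sub hI hJ hIJ, Complex.norm_conj]
  have hfc_le : ∀ z ∈ Metric.ball (0:ℂ) 1,
      ‖fc (sliceEmbed I z)‖ ≤ norm (F (conj z)) + norm (G z) := by
    intro z hz
    exact QAux.le_add_of_sq_eq (norm_nonneg _) (habs _) (habs _) (hfcnorm z hz)
  have hFle : ∀ z ∈ Metric.ball (0:ℂ) 1, norm (F z) ≤ ‖f (sliceEmbed I z)‖ := by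
    intro z hz
    apply QAux.le_of_sq_le_sq (habs _) (norm_nonneg _)
    rw [hfnorm z hz]
    nlinarith [sq_nonneg (norm (G z))]
  have hGle : ∀ z ∈ Metric.ball (0:ℂ) 1, norm (G z) ≤ ‖f (sliceEmbed I z)‖ := by
    intro z hz
    apply QAux.le_of_sq_le_sq (habs _) (norm_nonneg _)
    rw [hfnorm z hz]
    nlinarith [sq_nonneg (norm (F z))]
  -- `cHardyNorm ≤ hardyNorm f` for F and G
  have hcle : ∀ (H : ℂ → ℂ), ContinuousOn H (Metric.ball 0 1) →
      (∀ z ∈ Metric.ball (0:ℂ) 1, norm (H z) ≤ ‖f (sliceEmbed I z)‖) →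
      cHardyNorm H p ≤ hardyNorm f p := by
    intro H hHc hHle
    have hstep : sliceNormE f I p ≤ hardyNorm f p := le_biSup (fun I => sliceNormE f I p) hI
    by_cases hptop : p = ⊤
    · subst hptop
      rw [cHardyNorm, if_pos rfl]
      refine le_trans ?_ hstep
      rw [sliceNormE, if_pos rfl]
      apply iSup₂_le
      intro z hz
      refine le_trans (ENNReal.ofReal_le_ofReal (hHle z hz)) ?_
      exact le_iSup₂ (f := fun (w : ℝ×ℝ) (_ : w.1^2+w.2^2 < 1) =>
        ENNReal.ofReal ‖f (slicePt I w.1 w.2)‖) (z.re, z.im) (QAux.mem_ball_iff_sq.mp hz)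
    · have hq : 0 < p.toReal := ENNReal.toReal_pos hp.ne' hptop
      rw [cHardyNorm, if_neg hptop]
      refine le_trans ?_ hstep
      rw [sliceNormE, if_neg hptop, sliceNorm]
      apply iSup₂_le
      intro r hr
      obtain ⟨hr0, hr1⟩ := hr
      refine le_trans ?_ (le_biSup (fun r => sliceMp f I p.toReal r)
        (show r ∈ Set.Ico (0:ℝ) 1 from ⟨hr0, hr1⟩))
      simp only [cMp, sliceMp]
      apply ENNReal.ofReal_le_ofReal
      have hintH : (0:ℝ) ≤ ∫ θ in (0:ℝ)..(2*Real.pi),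
          norm (H (r * Complex.exp (θ * Complex.I)))^p.toReal := by
        apply intervalIntegral.integral_nonneg (by linarith)
        intro θ _
        positivity
      apply Real.rpow_le_rpow (mul_nonneg (one_div_pos.mpr h2π).le hintH) ?_ (by positivity)
      apply mul_le_mul_of_nonneg_left ?_ (one_div_pos.mpr h2π).le
      apply intervalIntegral.integral_mono_on (by linarith)
        ((QAux.cont_absF hHc hr0 hr1 hq.le).intervalIntegrable _ _)
        ((QAux.circle_cont_rpow hfreg hI hr0 hr1 hq.le).intervalIntegrable _ _)
      intro θ _
      rw [QAux.circlePt_eq]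
      exact Real.rpow_le_rpow (habs _)
        (hHle _ (QAux.circle_mem_ball hr0 hr1 θ)) hq.le
  have hFH : cHardyNorm F p ≤ hardyNorm f p := hcle F hFc hFle
  have hGH : cHardyNorm G p ≤ hardyNorm f p := hcle G hGc hGle
  have hFfin : cHardyNorm F p ≠ ⊤ := (lt_of_le_of_lt hFH hfHn).ne
  have hGfin : cHardyNorm G p ≠ ⊤ := (lt_of_le_of_lt hGH hfHn).ne
  -- slice-I pointwise bound in rpow form
  have hfc_rpow : ∀ {q : ℝ}, 0 < q → ∀ {r : ℝ}, 0 ≤ r → r < 1 → ∀ θ : ℝ,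
      ‖fc (circlePt I r θ)‖^q
        = (norm (F ((r:ℂ) * Complex.exp (((-θ:ℝ):ℂ) * Complex.I)))^2
            + norm (G ((r:ℂ) * Complex.exp ((θ:ℂ) * Complex.I)))^2)^(q/2) := by
    intro q hq r hr0 hr1 θ
    have hzmem := QAux.circle_mem_ball hr0 hr1 θ
    rw [QAux.circlePt_eq]
    have h2 := hfcnorm _ hzmem
    rw [← QAux.conj_circle, ← h2, ← Real.rpow_natCast _ 2, ← Real.rpow_mul (norm_nonneg _),
      show ((2:ℕ):ℝ)*(q/2) = q by push_cast; ring]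
  -- general slice-I estimate machine
  have hsliceI : ∀ (_ : p ≠ ⊤) (c : ℝ), 0 ≤ c →
      (∀ a b : ℝ, 0 ≤ a → 0 ≤ b →
        (a^2+b^2)^(p.toReal/2) ≤ c * (a^p.toReal + b^p.toReal)) →
      sliceNorm fc I p.toReal ^ p.toReal
        ≤ ENNReal.ofReal c * (cHardyNorm F p ^ p.toReal + cHardyNorm G p ^ p.toReal) := by
    intro hptop c hc hpt
    have hq : 0 < p.toReal := ENNReal.toReal_pos hp.ne' hptop
    rw [sliceNorm]
    apply QAux.biSup_rpow_le hq
    intro r hr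
    obtain ⟨hr0, hr1⟩ := hr
    have hA : Continuous (fun θ : ℝ =>
        norm (F ((r:ℂ) * Complex.exp ((θ:ℂ) * Complex.I)))^p.toReal) :=
      QAux.cont_absF hFc hr0 hr1 hq.le
    have hB : Continuous (fun θ : ℝ =>
        norm (G ((r:ℂ) * Complex.exp ((θ:ℂ) * Complex.I)))^p.toReal) :=
      QAux.cont_absF hGc hr0 hr1 hq.le
    have hAneg : Continuous (fun θ : ℝ =>
        norm (F ((r:ℂ) * Complex.exp (((-θ:ℝ):ℂ) * Complex.I)))^p.toReal) :=
      hA.comp continuous_neg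
    have hmain : sliceMp fc I p.toReal r ^ p.toReal
        ≤ ENNReal.ofReal ((1/(2*Real.pi)) * ∫ θ in (0:ℝ)..(2*Real.pi),
            c * (norm (F ((r:ℂ) * Complex.exp (((-θ:ℝ):ℂ) * Complex.I)))^p.toReal
              + norm (G ((r:ℂ) * Complex.exp ((θ:ℂ) * Complex.I)))^p.toReal)) := by
      apply QAux.sliceMp_pow_le hq (QAux.circle_cont_rpow hfc hI hr0 hr1 hq.le)
        (continuous_const.mul (hAneg.add hB))
      intro θ
      rw [hfc_rpow hq hr0 hr1 θ]
      exact hpt _ _ (habs _) (habs _)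
    refine le_trans hmain ?_
    have hintA : (0:ℝ) ≤ ∫ θ in (0:ℝ)..(2*Real.pi),
        norm (F ((r:ℂ) * Complex.exp ((θ:ℂ) * Complex.I)))^p.toReal :=
      intervalIntegral.integral_nonneg (by linarith) (fun θ _ => by positivity)
    have hintB : (0:ℝ) ≤ ∫ θ in (0:ℝ)..(2*Real.pi),
        norm (G ((r:ℂ) * Complex.exp ((θ:ℂ) * Complex.I)))^p.toReal :=
      intervalIntegral.integral_nonneg (by linarith) (fun θ _ => by positivity)
    have hcalc : (∫ θ in (0:ℝ)..(2*Real.pi),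
          c * (norm (F ((r:ℂ) * Complex.exp (((-θ:ℝ):ℂ) * Complex.I)))^p.toReal
            + norm (G ((r:ℂ) * Complex.exp ((θ:ℂ) * Complex.I)))^p.toReal))
        = c * ((∫ θ in (0:ℝ)..(2*Real.pi),
            norm (F ((r:ℂ) * Complex.exp ((θ:ℂ) * Complex.I)))^p.toReal)
          + ∫ θ in (0:ℝ)..(2*Real.pi),
            norm (G ((r:ℂ) * Complex.exp ((θ:ℂ) * Complex.I)))^p.toReal) := by
      rw [intervalIntegral.integral_const_mul,
        intervalIntegral.integral_add (hAneg.intervalIntegrable _ _) (hB.intervalIntegrable _ _),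
        QAux.integral_reflect (fun z => norm (F z)^p.toReal) r]
    rw [hcalc]
    have heq : ENNReal.ofReal ((1/(2*Real.pi)) * (c * ((∫ θ in (0:ℝ)..(2*Real.pi),
          norm (F ((r:ℂ) * Complex.exp ((θ:ℂ) * Complex.I)))^p.toReal)
        + ∫ θ in (0:ℝ)..(2*Real.pi),
          norm (G ((r:ℂ) * Complex.exp ((θ:ℂ) * Complex.I)))^p.toReal)))
        = ENNReal.ofReal c * (ENNReal.ofReal ((1/(2*Real.pi)) * ∫ θ in (0:ℝ)..(2*Real.pi),
            norm (F ((r:ℂ) * Complex.exp ((θ:ℂ) * Complex.I)))^p.toReal)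
          + ENNReal.ofReal ((1/(2*Real.pi)) * ∫ θ in (0:ℝ)..(2*Real.pi),
            norm (G ((r:ℂ) * Complex.exp ((θ:ℂ) * Complex.I)))^p.toReal)) := by
      rw [← ENNReal.ofReal_add (mul_nonneg (one_div_pos.mpr h2π).le hintA)
        (mul_nonneg (one_div_pos.mpr h2π).le hintB), ← ENNReal.ofReal_mul hc]
      congr 1
      ring
    rw [heq, ← QAux.cMp_pow hq, ← QAux.cMp_pow hq]
    apply mul_le_mul_right
    have hFle2 : cMp F p.toReal r ≤ cHardyNorm F p := by
      rw [cHardyNorm, if_neg hptop]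
      exact le_biSup (fun r => cMp F p.toReal r) (show r ∈ Set.Ico (0:ℝ) 1 from ⟨hr0, hr1⟩)
    have hGle2 : cMp G p.toReal r ≤ cHardyNorm G p := by
      rw [cHardyNorm, if_neg hptop]
      exact le_biSup (fun r => cMp G p.toReal r) (show r ∈ Set.Ico (0:ℝ) 1 from ⟨hr0, hr1⟩)
    exact add_le_add (ENNReal.rpow_le_rpow hFle2 hq.le) (ENNReal.rpow_le_rpow hGle2 hq.le)
  refine ⟨?_, ?_, ?_⟩
  · -- hardyNorm fc p < ⊤
    by_cases hptop : p = ⊤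
    · subst hptop
      have hFfin' : cHardyNorm F ⊤ < ⊤ := lt_of_le_of_lt hFH hfHn
      have hGfin' : cHardyNorm G ⊤ < ⊤ := lt_of_le_of_lt hGH hfHn
      have hsup : hardyNorm fc ⊤ ≤ (cHardyNorm F ⊤ + cHardyNorm G ⊤)
          + (cHardyNorm F ⊤ + cHardyNorm G ⊤) := by
        rw [hardyNorm]
        apply iSup₂_le
        intro K hK
        rw [sliceNormE, if_pos rfl]
        apply iSup₂_le
        intro w hw
        set z : ℂ := ⟨w.1, w.2⟩ with hzdef
        have hz : z ∈ Metric.ball (0:ℂ) 1 := QAux.mem_ball_iff_sq.mpr hw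
        have h1 : ‖fc (slicePt K w.1 w.2)‖
            ≤ (norm (F (conj z)) + norm (G z))
              + (norm (F z) + norm (G (conj z))) := by
          have h0 : slicePt K w.1 w.2 = sliceEmbed K z := rfl
          rw [h0]
          refine le_trans (QAux.rep_bound hfc hI hK hz) (add_le_add (hfc_le _ hz) ?_)
          have h2 := hfc_le _ (QAux.conj_mem_ball hz)
          rwa [Complex.conj_conj] at h2
        have hF1 : ENNReal.ofReal (norm (F z)) ≤ cHardyNorm F ⊤ := by
          rw [cHardyNorm, if_pos rfl]
          exact le_biSup (fun z => ENNReal.ofReal (norm (F z))) hz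
        have hF2 : ENNReal.ofReal (norm (F (conj z))) ≤ cHardyNorm F ⊤ := by
          rw [cHardyNorm, if_pos rfl]
          exact le_biSup (fun z => ENNReal.ofReal (norm (F z))) (QAux.conj_mem_ball hz)
        have hG1 : ENNReal.ofReal (norm (G z)) ≤ cHardyNorm G ⊤ := by
          rw [cHardyNorm, if_pos rfl]
          exact le_biSup (fun z => ENNReal.ofReal (norm (G z))) hz
        have hG2 : ENNReal.ofReal (norm (G (conj z))) ≤ cHardyNorm G ⊤ := by
          rw [cHardyNorm, if_pos rfl]
          exact le_biSup (fun z => ENNReal.ofReal (norm (G z))) (QAux.conj_mem_ball hz)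
        refine le_trans (ENNReal.ofReal_le_ofReal h1) ?_
        rw [ENNReal.ofReal_add (add_nonneg (habs _) (habs _)) (add_nonneg (habs _) (habs _)),
          ENNReal.ofReal_add (habs _) (habs _), ENNReal.ofReal_add (habs _) (habs _)]
        exact add_le_add (add_le_add hF2 hG1) (add_le_add hF1 hG2)
      exact lt_of_le_of_lt hsup (ENNReal.add_lt_top.mpr
        ⟨ENNReal.add_lt_top.mpr ⟨hFfin', hGfin'⟩, ENNReal.add_lt_top.mpr ⟨hFfin', hGfin'⟩⟩)
    · -- p < ⊤ : uniform bound over all slices via the representation formula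
      have hq : 0 < p.toReal := ENNReal.toReal_pos hp.ne' hptop
      set C : ℝ≥0∞ := ENNReal.ofReal (2^p.toReal * 2^p.toReal * 2)
        * (cHardyNorm F p ^ p.toReal + cHardyNorm G p ^ p.toReal) with hCdef
      have hKbound : ∀ K, K ∈ QSphere → ∀ r ∈ Set.Ico (0:ℝ) 1,
          sliceMp fc K p.toReal r ^ p.toReal ≤ C := by
        intro K hK r hr
        obtain ⟨hr0, hr1⟩ := hr
        have hA : Continuous (fun θ : ℝ =>
            norm (F ((r:ℂ) * Complex.exp ((θ:ℂ) * Complex.I)))^p.toReal) :=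
          QAux.cont_absF hFc hr0 hr1 hq.le
        have hB : Continuous (fun θ : ℝ =>
            norm (G ((r:ℂ) * Complex.exp ((θ:ℂ) * Complex.I)))^p.toReal) :=
          QAux.cont_absF hGc hr0 hr1 hq.le
        have hAneg : Continuous (fun θ : ℝ =>
            norm (F ((r:ℂ) * Complex.exp (((-θ:ℝ):ℂ) * Complex.I)))^p.toReal) :=
          hA.comp continuous_neg
        have hBneg : Continuous (fun θ : ℝ =>
            norm (G ((r:ℂ) * Complex.exp (((-θ:ℝ):ℂ) * Complex.I)))^p.toReal) :=
          hB.comp continuous_neg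
        have hpt : ∀ θ : ℝ, ‖fc (circlePt K r θ)‖^p.toReal
            ≤ (2^p.toReal * 2^p.toReal) *
              ((norm (F ((r:ℂ) * Complex.exp (((-θ:ℝ):ℂ) * Complex.I)))^p.toReal
                + norm (G ((r:ℂ) * Complex.exp ((θ:ℂ) * Complex.I)))^p.toReal)
              + (norm (F ((r:ℂ) * Complex.exp ((θ:ℂ) * Complex.I)))^p.toReal
                + norm (G ((r:ℂ) * Complex.exp (((-θ:ℝ):ℂ) * Complex.I)))^p.toReal)) := by
          intro θ
          have hz := QAux.circle_mem_ball hr0 hr1 θ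
          have h1 : ‖fc (circlePt K r θ)‖
              ≤ (norm (F ((r:ℂ) * Complex.exp (((-θ:ℝ):ℂ) * Complex.I)))
                  + norm (G ((r:ℂ) * Complex.exp ((θ:ℂ) * Complex.I))))
                + (norm (F ((r:ℂ) * Complex.exp ((θ:ℂ) * Complex.I)))
                  + norm (G ((r:ℂ) * Complex.exp (((-θ:ℝ):ℂ) * Complex.I)))) := by
            rw [QAux.circlePt_eq, ← QAux.conj_circle]
            refine le_trans (QAux.rep_bound hfc hI hK hz) (add_le_add (hfc_le _ hz) ?_)
            have h2 := hfc_le _ (QAux.conj_mem_ball hz)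
            rwa [Complex.conj_conj] at h2
          have h3 := Real.rpow_le_rpow (norm_nonneg _) h1 hq.le
          refine le_trans h3 ?_
          have h4 := QAux.two_rpow_bound
            (s := norm (F ((r:ℂ) * Complex.exp (((-θ:ℝ):ℂ) * Complex.I)))
              + norm (G ((r:ℂ) * Complex.exp ((θ:ℂ) * Complex.I))))
            (t := norm (F ((r:ℂ) * Complex.exp ((θ:ℂ) * Complex.I)))
              + norm (G ((r:ℂ) * Complex.exp (((-θ:ℝ):ℂ) * Complex.I))))
            (add_nonneg (habs _) (habs _)) (add_nonneg (habs _) (habs _)) hq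
          refine le_trans h4 ?_
          have h5 := QAux.two_rpow_bound (habs (F ((r:ℂ) * Complex.exp (((-θ:ℝ):ℂ) * Complex.I))))
            (habs (G ((r:ℂ) * Complex.exp ((θ:ℂ) * Complex.I)))) hq
          have h6 := QAux.two_rpow_bound (habs (F ((r:ℂ) * Complex.exp ((θ:ℂ) * Complex.I))))
            (habs (G ((r:ℂ) * Complex.exp (((-θ:ℝ):ℂ) * Complex.I)))) hq
          have h7 : (0:ℝ) ≤ 2^p.toReal := Real.rpow_nonneg (by norm_num) _
          calc (2:ℝ)^p.toReal *
              ((norm (F ((r:ℂ) * Complex.exp (((-θ:ℝ):ℂ) * Complex.I)))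
                  + norm (G ((r:ℂ) * Complex.exp ((θ:ℂ) * Complex.I))))^p.toReal
                + (norm (F ((r:ℂ) * Complex.exp ((θ:ℂ) * Complex.I)))
                  + norm (G ((r:ℂ) * Complex.exp (((-θ:ℝ):ℂ) * Complex.I))))^p.toReal)
              ≤ (2:ℝ)^p.toReal *
                ((2^p.toReal * (norm (F ((r:ℂ) * Complex.exp (((-θ:ℝ):ℂ) * Complex.I)))^p.toReal
                    + norm (G ((r:ℂ) * Complex.exp ((θ:ℂ) * Complex.I)))^p.toReal))
                + (2^p.toReal * (norm (F ((r:ℂ) * Complex.exp ((θ:ℂ) * Complex.I)))^p.toReal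
                    + norm (G ((r:ℂ) * Complex.exp (((-θ:ℝ):ℂ) * Complex.I)))^p.toReal))) :=
              mul_le_mul_of_nonneg_left (add_le_add h5 h6) h7
            _ = (2^p.toReal * 2^p.toReal) * (_ + _) := by ring
        have hmain : sliceMp fc K p.toReal r ^ p.toReal
            ≤ ENNReal.ofReal ((1/(2*Real.pi)) * ∫ θ in (0:ℝ)..(2*Real.pi),
              (2^p.toReal * 2^p.toReal) *
                ((norm (F ((r:ℂ) * Complex.exp (((-θ:ℝ):ℂ) * Complex.I)))^p.toReal
                  + norm (G ((r:ℂ) * Complex.exp ((θ:ℂ) * Complex.I)))^p.toReal)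
                + (norm (F ((r:ℂ) * Complex.exp ((θ:ℂ) * Complex.I)))^p.toReal
                  + norm (G ((r:ℂ) * Complex.exp (((-θ:ℝ):ℂ) * Complex.I)))^p.toReal))) :=
          QAux.sliceMp_pow_le hq (QAux.circle_cont_rpow hfc hK hr0 hr1 hq.le)
            (continuous_const.mul ((hAneg.add hB).add (hA.add hBneg))) hpt
        refine le_trans hmain ?_
        have hintA : (0:ℝ) ≤ ∫ θ in (0:ℝ)..(2*Real.pi),
            norm (F ((r:ℂ) * Complex.exp ((θ:ℂ) * Complex.I)))^p.toReal :=
          intervalIntegral.integral_nonneg (by linarith) (fun θ _ => by positivity)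
        have hintB : (0:ℝ) ≤ ∫ θ in (0:ℝ)..(2*Real.pi),
            norm (G ((r:ℂ) * Complex.exp ((θ:ℂ) * Complex.I)))^p.toReal :=
          intervalIntegral.integral_nonneg (by linarith) (fun θ _ => by positivity)
        have hcalc : (∫ θ in (0:ℝ)..(2*Real.pi),
              (2^p.toReal * 2^p.toReal) *
                ((norm (F ((r:ℂ) * Complex.exp (((-θ:ℝ):ℂ) * Complex.I)))^p.toReal
                  + norm (G ((r:ℂ) * Complex.exp ((θ:ℂ) * Complex.I)))^p.toReal)
                + (norm (F ((r:ℂ) * Complex.exp ((θ:ℂ) * Complex.I)))^p.toReal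
                  + norm (G ((r:ℂ) * Complex.exp (((-θ:ℝ):ℂ) * Complex.I)))^p.toReal)))
            = (2^p.toReal * 2^p.toReal) * (((∫ θ in (0:ℝ)..(2*Real.pi),
                norm (F ((r:ℂ) * Complex.exp ((θ:ℂ) * Complex.I)))^p.toReal)
              + ∫ θ in (0:ℝ)..(2*Real.pi),
                norm (G ((r:ℂ) * Complex.exp ((θ:ℂ) * Complex.I)))^p.toReal)
              + ((∫ θ in (0:ℝ)..(2*Real.pi),
                norm (F ((r:ℂ) * Complex.exp ((θ:ℂ) * Complex.I)))^p.toReal)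
              + ∫ θ in (0:ℝ)..(2*Real.pi),
                norm (G ((r:ℂ) * Complex.exp ((θ:ℂ) * Complex.I)))^p.toReal)) := by
          rw [intervalIntegral.integral_const_mul,
            intervalIntegral.integral_add
              ((hAneg.intervalIntegrable _ _).add (hB.intervalIntegrable _ _))
              ((hA.intervalIntegrable _ _).add (hBneg.intervalIntegrable _ _)),
            intervalIntegral.integral_add (hAneg.intervalIntegrable _ _)
              (hB.intervalIntegrable _ _),
            intervalIntegral.integral_add (hA.intervalIntegrable _ _)
              (hBneg.intervalIntegrable _ _),
            QAux.integral_reflect (fun z => norm (F z)^p.toReal) r,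
            QAux.integral_reflect (fun z => norm (G z)^p.toReal) r]
        rw [hcalc]
        have heq : ENNReal.ofReal ((1/(2*Real.pi)) * ((2^p.toReal * 2^p.toReal) *
              (((∫ θ in (0:ℝ)..(2*Real.pi),
                norm (F ((r:ℂ) * Complex.exp ((θ:ℂ) * Complex.I)))^p.toReal)
              + ∫ θ in (0:ℝ)..(2*Real.pi),
                norm (G ((r:ℂ) * Complex.exp ((θ:ℂ) * Complex.I)))^p.toReal)
              + ((∫ θ in (0:ℝ)..(2*Real.pi),
                norm (F ((r:ℂ) * Complex.exp ((θ:ℂ) * Complex.I)))^p.toReal)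
              + ∫ θ in (0:ℝ)..(2*Real.pi),
                norm (G ((r:ℂ) * Complex.exp ((θ:ℂ) * Complex.I)))^p.toReal))))
            = ENNReal.ofReal (2^p.toReal * 2^p.toReal * 2)
              * (ENNReal.ofReal ((1/(2*Real.pi)) * ∫ θ in (0:ℝ)..(2*Real.pi),
                  norm (F ((r:ℂ) * Complex.exp ((θ:ℂ) * Complex.I)))^p.toReal)
                + ENNReal.ofReal ((1/(2*Real.pi)) * ∫ θ in (0:ℝ)..(2*Real.pi),
                  norm (G ((r:ℂ) * Complex.exp ((θ:ℂ) * Complex.I)))^p.toReal)) := by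
          rw [← ENNReal.ofReal_add (mul_nonneg (one_div_pos.mpr h2π).le hintA)
            (mul_nonneg (one_div_pos.mpr h2π).le hintB),
            ← ENNReal.ofReal_mul (by positivity)]
          congr 1
          ring
        rw [heq, ← QAux.cMp_pow hq, ← QAux.cMp_pow hq, hCdef]
        apply mul_le_mul_right
        have hFle2 : cMp F p.toReal r ≤ cHardyNorm F p := by
          rw [cHardyNorm, if_neg hptop]
          exact le_biSup (fun r => cMp F p.toReal r) (show r ∈ Set.Ico (0:ℝ) 1 from ⟨hr0, hr1⟩)
        have hGle2 : cMp G p.toReal r ≤ cHardyNorm G p := by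
          rw [cHardyNorm, if_neg hptop]
          exact le_biSup (fun r => cMp G p.toReal r) (show r ∈ Set.Ico (0:ℝ) 1 from ⟨hr0, hr1⟩)
        exact add_le_add (ENNReal.rpow_le_rpow hFle2 hq.le) (ENNReal.rpow_le_rpow hGle2 hq.le)
      have hle : hardyNorm fc p ≤ C ^ (1/p.toReal) := by
        rw [hardyNorm]
        apply iSup₂_le
        intro K hK
        rw [sliceNormE, if_neg hptop, sliceNorm]
        exact QAux.rpow_inv_le hq (QAux.biSup_rpow_le hq (hKbound K hK))
      have hCfin : C ≠ ⊤ := by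
        rw [hCdef]
        apply ENNReal.mul_ne_top ENNReal.ofReal_ne_top
        apply ENNReal.add_ne_top.mpr
        exact ⟨(ENNReal.rpow_lt_top_of_nonneg hq.le hFfin).ne,
          (ENNReal.rpow_lt_top_of_nonneg hq.le hGfin).ne⟩
      exact lt_of_le_of_lt hle (ENNReal.rpow_lt_top_of_nonneg (by positivity)
        hCfin)
  · -- 0 < p.toReal < 2
    intro hplt hlt2
    have hq : 0 < p.toReal := ENNReal.toReal_pos hp.ne' hplt.ne
    have h := hsliceI hplt.ne (1:ℝ) zero_le_one (fun a b ha hb => by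
      rw [one_mul]; exact QAux.sq_sum_rpow_small ha hb hq hlt2.le)
    simpa using h
  · -- 2 ≤ p.toReal
    intro hplt h2le
    exact hsliceI hplt.ne _ (Real.rpow_nonneg (by norm_num) _)
      (fun a b ha hb => QAux.sq_sum_rpow_big ha hb h2le)
end
end
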